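/- arXiv:0912.1474 — 9 statements merged into one kernel-verified Lean document; each statement's English description precedes it below -/
import Mathlib

section
/- Let R be a finite-dimensional commutative local associative unital algebra over a field K of characteristic zero, with maximal ideal m, and let U be a K-linear subspace of m that generates R as a K-algebra. Then the K-linear span of the set {exp(u) : u ∈ U} is all of R. -/
/-- Truncated exponential `exp u = Σ_{k≥0} u^k / k!`; for `u` in the maximal ideal of a
finite-dimensional local algebra all terms with `k ≥ dim_K R` vanish. -/
noncomputable def expm (K : Type*) {R : Type*} [Field K] [CommRing R] [Algebra K R]
    (u : R) : R :=
  ∑ k ∈ Finset.range (Module.finrank K R), (k.factorial : K)⁻¹ • u ^ k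

open Module IsLocalRing
open scoped Pointwise

lemma maxpow (K R : Type*) [Field K] [CommRing R] [Algebra K R] [IsLocalRing R]
    [FiniteDimensional K R] :
    (maximalIdeal R) ^ (finrank K R) = ⊥ := by
  have noeth : IsNoetherian R R := isNoetherian_of_tower K inferInstance
  have key : ∀ k : ℕ, (maximalIdeal R) ^ k ≠ ⊥ →
      k + finrank K ((maximalIdeal R ^ k).restrictScalars K) ≤ finrank K R := by
    intro k
    induction k with
    | zero =>
      intro _
      simpa using Submodule.finrank_le ((maximalIdeal R ^ 0).restrictScalars K)
    | succ k ih =>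
      intro hk1
      have hle : maximalIdeal R ^ (k+1) ≤ maximalIdeal R ^ k :=
        Ideal.pow_le_pow_right (Nat.le_succ k)
      have hk : maximalIdeal R ^ k ≠ ⊥ := by
        intro h
        exact hk1 (le_bot_iff.mp (h ▸ hle))
      have hne : maximalIdeal R ^ (k+1) ≠ maximalIdeal R ^ k := by
        intro he
        apply hk
        apply Submodule.eq_bot_of_le_smul_of_le_jacobson_bot (maximalIdeal R) _
          (IsNoetherian.noetherian _)
        · rw [smul_eq_mul, mul_comm, ← pow_succ, he]
        · exact maximalIdeal_le_jacobson ⊥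
      have hlt : (maximalIdeal R ^ (k+1)).restrictScalars K <
          (maximalIdeal R ^ k).restrictScalars K :=
        lt_of_le_of_ne hle (fun h => hne (Submodule.restrictScalars_injective K R R h))
      have h2 := Submodule.finrank_lt_finrank_of_lt hlt
      have h3 := ih hk
      omega
  by_contra h
  have := key _ h
  have h0 : finrank K ((maximalIdeal R ^ finrank K R).restrictScalars K) = 0 := by omega
  exact h (by
    have := Submodule.finrank_eq_zero.mp h0
    exact Submodule.restrictScalars_injective K R R (by simpa using this))

lemma expm_add (K : Type*) {R : Type*} [Field K] [CharZero K] [CommRing R] [Algebra K R]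
    (u v : R) (h0 : ∀ i j : ℕ, finrank K R ≤ i + j → u ^ i * v ^ j = 0) :
    expm K (u + v) = expm K u * expm K v := by
  classical
  set n := finrank K R with hn
  set g : ℕ → ℕ → R :=
    fun i j => ((i.factorial * j.factorial : ℕ) : K)⁻¹ • (u ^ i * v ^ j) with hg
  rw [expm, expm, expm, Finset.sum_mul_sum]
  have hrhs : ∀ i ∈ Finset.range n, ∀ j ∈ Finset.range n,
      ((i.factorial : K)⁻¹ • u ^ i) * ((j.factorial : K)⁻¹ • v ^ j) = g i j := by
    intro i _ j _
    simp only [hg, smul_mul_smul_comm, Nat.cast_mul, mul_inv]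
  have hlhs : ∀ k ∈ Finset.range n,
      (k.factorial : K)⁻¹ • (u + v) ^ k
        = ∑ m ∈ Finset.range (k+1), g m (k-m) := by
    intro k _
    rw [add_pow, Finset.smul_sum]
    refine Finset.sum_congr rfl (fun m hm => ?_)
    have hmk : m ≤ k := Nat.lt_succ_iff.mp (Finset.mem_range.mp hm)
    have hfact : (k.choose m) * (m.factorial * (k-m).factorial) = k.factorial := by
      rw [← Nat.choose_mul_factorial_mul_factorial hmk]; ring
    have hm1 : ((m.factorial : ℕ) : K) ≠ 0 := Nat.cast_ne_zero.mpr m.factorial_ne_zero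
    have hm2 : (((k-m).factorial : ℕ) : K) ≠ 0 := Nat.cast_ne_zero.mpr (k-m).factorial_ne_zero
    have hkf : ((k.factorial : ℕ) : K) ≠ 0 := Nat.cast_ne_zero.mpr k.factorial_ne_zero
    have hfactK : (k.choose m : K) * ((m.factorial : K) * ((k-m).factorial : K))
        = (k.factorial : K) := by exact_mod_cast congrArg (Nat.cast (R := K)) hfact
    have hcne : (k.choose m : K) ≠ 0 := Nat.cast_ne_zero.mpr (Nat.choose_pos hmk).ne'
    have hc : ((k.factorial : K))⁻¹ * (k.choose m : K)
        = ((m.factorial * (k-m).factorial : ℕ) : K)⁻¹ := by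
      rw [Nat.cast_mul, ← hfactK, mul_inv, mul_comm ((k.choose m : K))⁻¹, mul_assoc,
        inv_mul_cancel₀ hcne, mul_one]
    have hcast : ((k.choose m : ℕ) : R) * (u ^ m * v ^ (k-m))
        = (k.choose m : K) • (u ^ m * v ^ (k-m)) := by
      rw [Nat.cast_smul_eq_nsmul K, nsmul_eq_mul]
    rw [mul_comm (u ^ m * v ^ (k - m)) ((k.choose m : ℕ) : R), hcast, smul_smul, hc]
  rw [Finset.sum_congr rfl (fun i hi => Finset.sum_congr rfl (fun j hj => hrhs i hi j hj)),
    Finset.sum_congr rfl hlhs, Finset.sum_sigma', ← Finset.sum_product']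
  have hz : ∀ p ∈ Finset.range n ×ˢ Finset.range n,
      p ∉ (Finset.range n ×ˢ Finset.range n).filter (fun p => p.1 + p.2 < n) →
        g p.1 p.2 = 0 := by
    intro p hp hnp
    have : ¬ (p.1 + p.2 < n) := by
      intro h; exact hnp (Finset.mem_filter.mpr ⟨hp, h⟩)
    simp only [hg]
    rw [h0 p.1 p.2 (by omega), smul_zero]
  rw [← Finset.sum_subset (Finset.filter_subset _ _) hz]
  refine Finset.sum_nbij' (fun x => (x.2, x.1 - x.2)) (fun p => ⟨p.1 + p.2, p.1⟩)
    ?_ ?_ ?_ ?_ ?_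
  · rintro ⟨k, m⟩ hx
    simp only [Finset.mem_sigma, Finset.mem_range] at hx
    simp only [Finset.mem_filter, Finset.mem_product, Finset.mem_range]
    omega
  · rintro ⟨a, b⟩ hp
    simp only [Finset.mem_filter, Finset.mem_product, Finset.mem_range] at hp
    simp only [Finset.mem_sigma, Finset.mem_range]
    omega
  · rintro ⟨k, m⟩ hx
    simp only [Finset.mem_sigma, Finset.mem_range] at hx
    have h : m + (k - m) = k := by omega
    simp [h]
  · rintro ⟨a, b⟩ hp
    simp
  · rintro ⟨k, m⟩ hx
    rfl

lemma mem_span_expm (K R : Type*) [Field K] [CharZero K] [CommRing R] [Algebra K R]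
    [IsLocalRing R] [FiniteDimensional K R]
    (U : Submodule K R) (u : R) (hu : u ∈ U) (hun : u ^ (finrank K R) = 0) :
    u ∈ Submodule.span K (expm K '' (U : Set R)) := by
  classical
  set n := finrank K R with hn
  have hn1 : 1 ≤ n := finrank_pos
  rcases eq_or_lt_of_le hn1 with h1 | h2
  · have : u = 0 := by
      have := hun
      rw [← h1, pow_one] at this
      exact this
    rw [this]
    exact Submodule.zero_mem _
  -- 2 ≤ n
  set v : Fin n → K := fun i => ((i : ℕ) : K) with hv
  have hinj : Function.Injective v := by
    intro a b hab
    exact Fin.val_injective (Nat.cast_injective hab)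
  set V : Matrix (Fin n) (Fin n) K := Matrix.vandermonde v with hV
  have hdet : IsUnit V.det := by
    rw [isUnit_iff_ne_zero]
    rw [hV, Ne, Matrix.det_vandermonde_eq_zero_iff]
    rintro ⟨i, j, hij, hne⟩
    exact hne (hinj hij)
  have hVV : V⁻¹ * V = 1 := Matrix.nonsing_inv_mul V hdet
  set i1 : Fin n := ⟨1, h2⟩ with hi1
  have key : ∑ j : Fin n, (V⁻¹ i1 j) • expm K (((j : ℕ) : K) • u) = u := by
    have hexp : ∀ j : Fin n, expm K (((j : ℕ) : K) • u)
        = ∑ k ∈ Finset.range n, ((((j : ℕ) : K)) ^ k * (k.factorial : K)⁻¹) • u ^ k := by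
      intro j
      rw [expm]
      refine Finset.sum_congr rfl (fun k _ => ?_)
      rw [smul_pow, smul_smul, mul_comm]
    calc ∑ j : Fin n, (V⁻¹ i1 j) • expm K (((j : ℕ) : K) • u)
        = ∑ j : Fin n, ∑ k ∈ Finset.range n,
            (V⁻¹ i1 j * ((((j : ℕ) : K)) ^ k * (k.factorial : K)⁻¹)) • u ^ k := by
          refine Finset.sum_congr rfl (fun j _ => ?_)
          rw [hexp j, Finset.smul_sum]
          exact Finset.sum_congr rfl (fun k _ => by rw [smul_smul])
      _ = ∑ k ∈ Finset.range n, ∑ j : Fin n,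
            (V⁻¹ i1 j * ((((j : ℕ) : K)) ^ k * (k.factorial : K)⁻¹)) • u ^ k :=
          Finset.sum_comm
      _ = ∑ k : Fin n, ∑ j : Fin n,
            (V⁻¹ i1 j * ((((j : ℕ) : K)) ^ (k : ℕ) * ((k : ℕ).factorial : K)⁻¹)) • u ^ (k : ℕ) := by
          rw [Finset.sum_range]
      _ = ∑ k : Fin n, ((∑ j : Fin n, V⁻¹ i1 j * V j k) * (((k : ℕ)).factorial : K)⁻¹) • u ^ (k : ℕ) := by
          refine Finset.sum_congr rfl (fun k _ => ?_)
          rw [Finset.sum_mul, Finset.sum_smul]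
          refine Finset.sum_congr rfl (fun j _ => ?_)
          congr 1
          rw [hV, Matrix.vandermonde_apply, hv]
          ring
      _ = ∑ k : Fin n, (((1 : Matrix (Fin n) (Fin n) K) i1 k) * (((k : ℕ)).factorial : K)⁻¹) • u ^ (k : ℕ) := by
          refine Finset.sum_congr rfl (fun k _ => ?_)
          rw [← hVV, Matrix.mul_apply]
      _ = u := by
          simp [Matrix.one_apply, ite_mul, ite_smul, Finset.sum_ite_eq, hi1]
  rw [← key]
  refine Submodule.sum_mem _ (fun j _ => ?_)
  refine Submodule.smul_mem _ _ (Submodule.subset_span ?_)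
  exact ⟨((j : ℕ) : K) • u, U.smul_mem _ hu, rfl⟩

/-- if `U` is a subspace of the maximal ideal `m` of a finite-dimensional
commutative local algebra `R` over a field of characteristic zero, and `U` generates `R` as a
`K`-algebra, then the linear span of `{exp u : u ∈ U}` is all of `R`. -/
theorem stmt3 (K R : Type*) [Field K] [CharZero K] [CommRing R] [Algebra K R]
    [IsLocalRing R] [FiniteDimensional K R]
    (U : Submodule K R)
    (hUm : (U : Set R) ⊆ (IsLocalRing.maximalIdeal R : Set R))
    (hgen : Algebra.adjoin K (U : Set R) = ⊤) :
    Submodule.span K (expm K '' (U : Set R)) = ⊤ := by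
  classical
  have hn1 : 0 < finrank K R := finrank_pos
  have hmpow := maxpow K R
  have hpz : ∀ w : R, w ∈ maximalIdeal R → w ^ (finrank K R) = 0 := by
    intro w hw
    have := Ideal.pow_mem_pow hw (finrank K R)
    rw [hmpow] at this
    exact (Ideal.mem_bot).mp this
  have h0 : ∀ u v : R, u ∈ maximalIdeal R → v ∈ maximalIdeal R →
      ∀ i j : ℕ, finrank K R ≤ i + j → u ^ i * v ^ j = 0 := by
    intro u v hu hv i j hij
    have hm : u ^ i * v ^ j ∈ maximalIdeal R ^ (i + j) := by
      rw [pow_add]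
      exact Ideal.mul_mem_mul (Ideal.pow_mem_pow hu i) (Ideal.pow_mem_pow hv j)
    have h2 : maximalIdeal R ^ (i + j) ≤ maximalIdeal R ^ (finrank K R) :=
      Ideal.pow_le_pow_right hij
    have := h2 hm
    rw [hmpow] at this
    exact (Ideal.mem_bot).mp this
  have hone : expm K (0 : R) = 1 := by
    rw [expm, Finset.sum_eq_single 0]
    · simp
    · intro k _ hk
      rw [zero_pow hk, smul_zero]
    · intro h
      exact absurd (Finset.mem_range.mpr hn1) h
  set S := Submodule.span K (expm K '' (U : Set R)) with hS
  have h1S : (1 : R) ∈ S := by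
    rw [← hone]
    exact Submodule.subset_span ⟨0, U.zero_mem, rfl⟩
  have hmulS : ∀ x y : R, x ∈ S → y ∈ S → x * y ∈ S := by
    have hsub : (expm K '' (U : Set R)) * (expm K '' (U : Set R)) ⊆ (S : Set R) := by
      rintro z ⟨x, ⟨a, ha, rfl⟩, y, ⟨b, hb, rfl⟩, rfl⟩
      have : expm K a * expm K b = expm K (a + b) :=
        (expm_add K a b (h0 a b (hUm ha) (hUm hb))).symm
      show expm K a * expm K b ∈ (S : Set R)
      rw [this]
      exact Submodule.subset_span ⟨a + b, U.add_mem ha hb, rfl⟩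
    intro x y hx hy
    have : S * S ≤ S := by
      rw [hS, Submodule.span_mul_span]
      exact Submodule.span_le.mpr hsub
    exact this (Submodule.mul_mem_mul hx hy)
  set A : Subalgebra K R := Submodule.toSubalgebra S h1S hmulS with hA
  have hUA : (U : Set R) ⊆ (A : Set R) := by
    intro u hu
    exact mem_span_expm K R U u hu (hpz u (hUm hu))
  have htop : A = ⊤ := top_le_iff.mp (hgen ▸ Algebra.adjoin_le hUA)
  have : Subalgebra.toSubmodule A = ⊤ := by rw [htop]; rfl
  exact this
end

section
/- Let R be a finite-dimensional commutative local associative unital algebra over a field K of characteristic zero, with maximal ideal m, and let U be a K-linear subspace of m that generates R as a K-algebra. Then for an element v ∈ R, the K-linear span of the set {exp(u)·v : u ∈ U} equals R if and only if v is a unit of R. (That is, the cyclic vectors of the corresponding representation are exactly the units of R, and their complement is the hyperplane m.) -/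
set_option linter.unusedSectionVars false

section aux
open Finset
variable {K R : Type*} [Field K] [CharZero K] [CommRing R] [Algebra K R]


lemma Emul (m : ℕ) (u w : R) (hz : ∀ i j : ℕ, m ≤ i + j → u ^ i * w ^ j = 0) :
    (∑ k ∈ range m, (k.factorial : K)⁻¹ • u ^ k) *
      (∑ k ∈ range m, (k.factorial : K)⁻¹ • w ^ k) =
      ∑ k ∈ range m, (k.factorial : K)⁻¹ • (u + w) ^ k := by
  set g : ℕ × ℕ → R := fun p => ((p.1.factorial : K)⁻¹ * (p.2.factorial : K)⁻¹) • (u ^ p.1 * w ^ p.2) with hg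
  have hL : (∑ k ∈ range m, (k.factorial : K)⁻¹ • u ^ k) *
      (∑ k ∈ range m, (k.factorial : K)⁻¹ • w ^ k) = ∑ p ∈ range m ×ˢ range m, g p := by
    rw [Finset.sum_mul_sum, Finset.sum_product]
    simp [hg, smul_mul_smul_comm, smul_smul, mul_comm]
  have hR : ∀ k : ℕ, (k.factorial : K)⁻¹ • (u + w) ^ k = ∑ i ∈ range (k + 1), g (i, k - i) := by
    intro k
    rw [add_pow, Finset.smul_sum]
    refine Finset.sum_congr rfl fun i hi => ?_
    have hik : i ≤ k := Nat.lt_succ_iff.mp (mem_range.mp hi)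
    have hfact : (k.factorial : K)⁻¹ * (k.choose i : K) =
        ((i.factorial : K)⁻¹ * ((k - i).factorial : K)⁻¹) := by
      have h := Nat.choose_mul_factorial_mul_factorial hik
      have hcc : (k.choose i : K) * (i.factorial : K) * ((k - i).factorial : K) = (k.factorial : K) := by
        exact_mod_cast congrArg (Nat.cast : ℕ → K) h
      have hk0 : (k.factorial : K) ≠ 0 := Nat.cast_ne_zero.mpr k.factorial_ne_zero
      have hi0 : (i.factorial : K) ≠ 0 := Nat.cast_ne_zero.mpr i.factorial_ne_zero
      have hki0 : ((k - i).factorial : K) ≠ 0 := Nat.cast_ne_zero.mpr (k - i).factorial_ne_zero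
      field_simp
      linear_combination hcc
    have hcast : u ^ i * w ^ (k - i) * (k.choose i : R) =
        (k.choose i : K) • (u ^ i * w ^ (k - i)) := by
      rw [Algebra.smul_def, map_natCast, mul_comm]
    rw [hcast, smul_smul, hfact]
  have hRsum : ∑ k ∈ range m, (k.factorial : K)⁻¹ • (u + w) ^ k =
      ∑ p ∈ (range m ×ˢ range m).filter (fun p => p.1 + p.2 < m), g p := by
    calc ∑ k ∈ range m, (k.factorial : K)⁻¹ • (u + w) ^ k
        = ∑ k ∈ range m, ∑ i ∈ range (k + 1), g (i, k - i) := by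
          exact Finset.sum_congr rfl fun k _ => hR k
      _ = ∑ q ∈ (range m).sigma (fun k => range (k + 1)), g (q.2, q.1 - q.2) :=
          Finset.sum_sigma' _ _ _
      _ = ∑ p ∈ (range m ×ˢ range m).filter (fun p => p.1 + p.2 < m), g p := by
          refine Finset.sum_nbij' (fun q => (q.2, q.1 - q.2)) (fun p => ⟨p.1 + p.2, p.1⟩)
            ?_ ?_ ?_ ?_ ?_
          · rintro ⟨k, i⟩ hq
            simp only [Finset.mem_sigma, mem_range] at hq
            obtain ⟨hk, hi⟩ := hq
            have hik : i ≤ k := Nat.lt_succ_iff.mp hi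
            simp only [Finset.mem_filter, Finset.mem_product, mem_range]
            exact ⟨⟨lt_of_le_of_lt hik hk, lt_of_le_of_lt (Nat.sub_le _ _) hk⟩,
              by omega⟩
          · rintro ⟨i, j⟩ hp
            simp only [Finset.mem_filter, Finset.mem_product, mem_range] at hp
            simp only [Finset.mem_sigma, mem_range]
            omega
          · rintro ⟨k, i⟩ hq
            simp only [Finset.mem_sigma, mem_range] at hq
            have : i + (k - i) = k := by omega
            simp [this]
          · rintro ⟨i, j⟩ hp
            simp
          · rintro ⟨k, i⟩ hq
            rfl
  rw [hL, hRsum, ← Finset.sum_filter_add_sum_filter_not (range m ×ˢ range m)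
    (fun p => p.1 + p.2 < m) g]
  have : ∑ p ∈ (range m ×ˢ range m).filter (fun p => ¬ p.1 + p.2 < m), g p = 0 := by
    refine Finset.sum_eq_zero fun p hp => ?_
    simp only [Finset.mem_filter, not_lt] at hp
    simp [hg, hz p.1 p.2 hp.2]
  rw [this, add_zero]

lemma pow_finrank_eq_zero_of_mem_max [IsLocalRing R] [FiniteDimensional K R] {u : R}
    (hu : u ∈ IsLocalRing.maximalIdeal R) : u ^ Module.finrank K R = 0 := by
  set n := Module.finrank K R with hn
  set W : ℕ → Submodule K R := fun k => (Ideal.span {u ^ k}).restrictScalars K with hW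
  have hmem : ∀ k, u ^ k ∈ W k := fun k => Ideal.subset_span (Set.mem_singleton _)
  have hmono : ∀ k, W (k + 1) ≤ W k := by
    intro k x hx
    have : Ideal.span {u ^ (k+1)} ≤ Ideal.span {u ^ k} :=
      Ideal.span_singleton_le_span_singleton.mpr ⟨u, pow_succ u k⟩
    exact this hx
  have hstep : ∀ k, W (k + 1) = W k → u ^ k = 0 := by
    intro k hk
    have hmem' : u ^ k ∈ Ideal.span {u ^ (k + 1)} := by
      have : u ^ k ∈ W (k + 1) := by rw [hk]; exact hmem k
      exact this
    obtain ⟨c, hc⟩ := Ideal.mem_span_singleton'.mp hmem'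
    have hcu : c * u ∈ nonunits R := (IsLocalRing.mem_maximalIdeal _).mp
      ((IsLocalRing.maximalIdeal R).mul_mem_left c hu)
    obtain ⟨y, hy⟩ := (IsLocalRing.isUnit_one_sub_self_of_mem_nonunits _ hcu).exists_right_inv
    have h0 : u ^ k * (1 - c * u) = 0 := by linear_combination -hc
    calc u ^ k = u ^ k * ((1 - c * u) * y) := by rw [hy, mul_one]
      _ = u ^ k * (1 - c * u) * y := by ring
      _ = 0 := by rw [h0, zero_mul]
  have main : ∀ k, u ^ k = 0 ∨ Module.finrank K (W k) + k ≤ n := by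
    intro k; induction k with
    | zero => right; simpa using Submodule.finrank_le (W 0)
    | succ k ih =>
      rcases ih with h | h
      · left; rw [pow_succ, h, zero_mul]
      · by_cases he : W (k + 1) = W k
        · left; rw [pow_succ, hstep k he, zero_mul]
        · right
          have hlt := Submodule.finrank_lt_finrank_of_lt (lt_of_le_of_ne (hmono k) he)
          omega
  rcases main n with h | h
  · exact h
  · have h0 : Module.finrank K (W n) = 0 := by omega
    have hbot : W n = ⊥ := Submodule.finrank_eq_zero.mp h0
    have hm := hmem n
    rw [hbot] at hm
    simpa using hm


lemma pow_zero_mono {u : R} {a b : ℕ} (h : u ^ a = 0) (hab : a ≤ b) : u ^ b = 0 := by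
  have hb : b = a + (b - a) := by omega
  rw [hb, pow_add, h, zero_mul]

lemma expm_eq_sum_range [FiniteDimensional K R] {u : R}
    (hu : u ^ Module.finrank K R = 0) {m : ℕ} (hm : Module.finrank K R ≤ m) :
    expm K u = ∑ k ∈ range m, (k.factorial : K)⁻¹ • u ^ k := by
  unfold expm
  refine Finset.sum_subset (Finset.range_subset_range.mpr hm) fun k _ hk => ?_
  rw [pow_zero_mono hu (by simpa using hk), smul_zero]

lemma expm_zero [Nontrivial R] [FiniteDimensional K R] : expm K (0 : R) = 1 := by
  unfold expm
  rw [Finset.sum_eq_single_of_mem 0 (Finset.mem_range.mpr Module.finrank_pos)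
    (fun k _ hk => by rw [zero_pow hk, smul_zero])]
  simp

lemma expm_add_s5 [IsLocalRing R] [FiniteDimensional K R] {u w : R}
    (hu : u ∈ IsLocalRing.maximalIdeal R) (hw : w ∈ IsLocalRing.maximalIdeal R) :
    expm K u * expm K w = expm K (u + w) := by
  have hu0 := pow_finrank_eq_zero_of_mem_max (K := K) hu
  have hw0 := pow_finrank_eq_zero_of_mem_max (K := K) hw
  have huw0 := pow_finrank_eq_zero_of_mem_max (K := K)
    ((IsLocalRing.maximalIdeal R).add_mem hu hw)
  have hnn : Module.finrank K R ≤ Module.finrank K R + Module.finrank K R :=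
    Nat.le_add_right _ _
  rw [expm_eq_sum_range hu0 hnn, expm_eq_sum_range hw0 hnn, expm_eq_sum_range huw0 hnn]
  refine Emul _ u w fun i j hij => ?_
  rcases (by omega : Module.finrank K R ≤ i ∨ Module.finrank K R ≤ j) with h | h
  · rw [pow_zero_mono hu0 h, zero_mul]
  · rw [pow_zero_mono hw0 h, mul_zero]

lemma mem_adjoin_expm [IsLocalRing R] [FiniteDimensional K R] (U : Submodule K R)
    (hUm : (U : Set R) ⊆ (IsLocalRing.maximalIdeal R : Set R)) {u : R} (hu : u ∈ U) :
    u ∈ Subalgebra.toSubmodule (Algebra.adjoin K (expm K '' (U : Set R))) := by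
  rw [← Subspace.forall_mem_dualAnnihilator_apply_eq_zero_iff]
  intro φ hφ
  rcases eq_or_ne u 0 with rfl | hu0
  · simp
  have hum : u ∈ IsLocalRing.maximalIdeal R := hUm hu
  have h1n : 1 < Module.finrank K R := by
    by_contra h
    have hpos : 0 < Module.finrank K R := Module.finrank_pos
    have h1 : Module.finrank K R = 1 := by omega
    have hbt := Subalgebra.bot_eq_top_of_finrank_eq_one h1
    have hub : u ∈ (⊥ : Subalgebra K R) := by rw [hbt]; trivial
    obtain ⟨c, hc⟩ := Algebra.mem_bot.mp hub
    have hnu : ¬ IsUnit u := (IsLocalRing.mem_maximalIdeal _).mp hum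
    rcases eq_or_ne c 0 with rfl | hc0
    · exact hu0 (by rw [← hc]; simp)
    · exact hnu (hc ▸ (algebraMap K R).isUnit_map hc0.isUnit)
  set p : Polynomial K := ∑ k ∈ Finset.range (Module.finrank K R),
    Polynomial.C (φ ((k.factorial : K)⁻¹ • u ^ k)) * Polynomial.X ^ k with hp
  have heval : ∀ t : K, p.eval t = φ (expm K (t • u)) := by
    intro t
    rw [hp, Polynomial.eval_finset_sum]
    unfold expm
    rw [map_sum]
    refine Finset.sum_congr rfl fun k _ => ?_
    rw [Polynomial.eval_mul, Polynomial.eval_C, Polynomial.eval_pow, Polynomial.eval_X,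
      smul_pow, map_smul, map_smul, map_smul, smul_eq_mul, smul_eq_mul, smul_eq_mul]
    ring
  have hmemA : ∀ t : K, φ (expm K (t • u)) = 0 := by
    intro t
    have hmem : expm K (t • u) ∈ Algebra.adjoin K (expm K '' (U : Set R)) :=
      Algebra.subset_adjoin ⟨t • u, U.smul_mem t hu, rfl⟩
    exact (Submodule.mem_dualAnnihilator φ).mp hφ _ hmem
  have hp0 : p = 0 :=
    Polynomial.funext fun t => by rw [heval t, hmemA t, Polynomial.eval_zero]
  have hcoeff : p.coeff 1 = φ u := by
    rw [hp, Polynomial.finset_sum_coeff]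
    simp only [Polynomial.coeff_C_mul, Polynomial.coeff_X_pow, mul_ite, mul_one, mul_zero]
    rw [Finset.sum_ite_eq (Finset.range (Module.finrank K R)) 1]
    simp [h1n]
  rw [← hcoeff, hp0, Polynomial.coeff_zero]

end aux

/-- if `U ⊆ m` generates `R` as a `K`-algebra, then for `v ∈ R` the linear span
of `{exp(u) · v : u ∈ U}` equals `R` if and only if `v` is a unit of `R`. -/
theorem stmt5 (K R : Type*) [Field K] [CharZero K] [CommRing R] [Algebra K R]
    [IsLocalRing R] [FiniteDimensional K R]
    (U : Submodule K R)
    (hUm : (U : Set R) ⊆ (IsLocalRing.maximalIdeal R : Set R))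
    (hgen : Algebra.adjoin K (U : Set R) = ⊤) (v : R) :
    Submodule.span K ((fun u : R => expm K u * v) '' (U : Set R)) = ⊤ ↔ IsUnit v := by
  constructor
  · intro hspan
    by_contra hv
    have hvm : v ∈ IsLocalRing.maximalIdeal R := (IsLocalRing.mem_maximalIdeal _).mpr hv
    have hle : Submodule.span K ((fun u : R => expm K u * v) '' (U : Set R)) ≤
        (IsLocalRing.maximalIdeal R).restrictScalars K := by
      rw [Submodule.span_le]
      rintro x ⟨u, hu, rfl⟩
      exact Ideal.mul_mem_left _ _ hvm
    rw [hspan] at hle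
    exact (IsLocalRing.mem_maximalIdeal _).mp (hle Submodule.mem_top) isUnit_one
  · intro hv
    have hT : Submodule.span K (expm K '' (U : Set R)) = ⊤ := by
      let M : Submonoid R :=
        { carrier := expm K '' (U : Set R)
          one_mem' := ⟨0, U.zero_mem, expm_zero⟩
          mul_mem' := by
            rintro x y ⟨a, ha, rfl⟩ ⟨b, hb, rfl⟩
            exact ⟨a + b, U.add_mem ha hb, (expm_add_s5 (hUm ha) (hUm hb)).symm⟩ }
      have hcl : Submonoid.closure (expm K '' (U : Set R)) = M := Submonoid.closure_eq M
      have hspan := Algebra.adjoin_eq_span (R := K) (s := expm K '' (U : Set R))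
      rw [hcl] at hspan
      have htop : Algebra.adjoin K (expm K '' (U : Set R)) = ⊤ := by
        rw [eq_top_iff, ← hgen]
        refine Algebra.adjoin_le fun u hu => mem_adjoin_expm U hUm hu
      calc Submodule.span K (expm K '' (U : Set R)) = Submodule.span K (M : Set R) := rfl
        _ = Subalgebra.toSubmodule (Algebra.adjoin K (expm K '' (U : Set R))) := hspan.symm
        _ = ⊤ := by rw [htop]; rfl
    have himg : (fun u : R => expm K u * v) '' (U : Set R) =
        (LinearMap.mulRight K v) '' (expm K '' (U : Set R)) := by
      rw [Set.image_image]
      rfl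
    rw [himg, ← Submodule.map_span, hT, Submodule.map_top, LinearMap.range_eq_top]
    intro x
    obtain ⟨vu, rfl⟩ := hv
    exact ⟨x * ↑vu⁻¹, by simp [mul_assoc]⟩
end

section
/- Let K be an algebraically closed field of characteristic zero, n ≥ 1, and let R be a commutative local associative unital K-algebra of K-dimension n+1. Then the action of the unit group R^× on R by multiplication has only finitely many orbits if and only if R is isomorphic as a K-algebra to K[x]/(x^{n+1}). (Orbits of R^× on nonzero elements are exactly the association classes, which correspond to the G_a^n-orbits on P^n; hence this says that K[x]/(x^{n+1}) is the unique (n+1)-dimensional local algebra of modality zero.) -/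
/-!
A unit `u = c₀ + w` (`c₀ ∈ K`, `w ∈ 𝔪`; the residue field is `K` as `K` is algebraically closed)
acts on `𝔪 / 𝔪²` as the scalar `c₀`. Hence if `𝔪` is not principal, Nakayama gives `x, y ∈ 𝔪`
independent modulo `𝔪²`, and the elements `x + c • y`, `c ∈ K`, lie in pairwise distinct orbits.
If `𝔪 = (t)`, then `t` is nilpotent and `R = K + t R`, so `X ↦ t` maps `K[X]` onto `R` with kernel
`(minpoly K t) = (X ^ dim R)`; conversely in such a ring every element is `0` or a unit times a
power of `t`, so there are finitely many orbits.
-/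

open IsLocalRing Polynomial MulAction

section LocalRing

variable {R : Type*} [CommRing R] [IsLocalRing R]

theorem isNilpotent_of_mem_maximalIdeal [IsArtinianRing R] {x : R} (hx : x ∈ maximalIdeal R) :
    IsNilpotent x := by
  obtain ⟨N, hN⟩ := IsArtinianRing.isNilpotent_jacobson_bot (R := R)
  refine ⟨N, ?_⟩
  have hxN := Ideal.pow_mem_pow (maximalIdeal_le_jacobson ⊥ hx) N
  rwa [hN, Ideal.zero_eq_bot, Ideal.mem_bot] at hxN

theorem pow_dvd_or_exists_eq_unit_mul_pow {t : R} (ht : maximalIdeal R = Ideal.span {t})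
    (N : ℕ) (a : R) : t ^ N ∣ a ∨ ∃ k < N, ∃ u : Rˣ, a = u * t ^ k := by
  induction N with
  | zero => exact Or.inl (by simp)
  | succ N ih =>
    rcases ih with ⟨b, rfl⟩ | ⟨k, hk, u, hu⟩
    · by_cases hb : IsUnit b
      · obtain ⟨u, rfl⟩ := hb
        exact Or.inr ⟨N, N.lt_succ_self, u, mul_comm _ _⟩
      · have hb : b ∈ Ideal.span {t} := ht ▸ (mem_maximalIdeal b).mpr hb
        obtain ⟨c, rfl⟩ := Ideal.mem_span_singleton.mp hb
        exact Or.inl ⟨c, by ring⟩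
    · exact Or.inr ⟨k, Nat.lt_succ_of_lt hk, u, hu⟩

theorem finite_orbitRel_quotient_units_of_maximalIdeal_eq_span {t : R}
    (ht : maximalIdeal R = Ideal.span {t}) (hnil : IsNilpotent t) :
    Finite (orbitRel.Quotient Rˣ R) := by
  obtain ⟨N, htN⟩ := hnil
  refine Finite.of_surjective (fun k : Fin (N + 1) ↦ (⟦t ^ (k : ℕ)⟧ : orbitRel.Quotient Rˣ R))
    fun q ↦ ?_
  obtain ⟨a, rfl⟩ := Quotient.exists_rep q
  rcases pow_dvd_or_exists_eq_unit_mul_pow ht N a with ⟨b, rfl⟩ | ⟨k, hk, u, rfl⟩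
  · exact ⟨Fin.last N, by simp [htN]⟩
  · refine ⟨⟨k, Nat.lt_succ_of_lt hk⟩, Quotient.sound ?_⟩
    exact mem_orbit_iff.mpr ⟨u⁻¹, by simp [Units.smul_def]⟩

theorem maximalIdeal_eq_span_of_le_sq_sup [IsNoetherianRing R] {x : R}
    (hx : x ∈ maximalIdeal R) (h : maximalIdeal R ≤ maximalIdeal R ^ 2 ⊔ Ideal.span {x}) :
    maximalIdeal R = Ideal.span {x} := by
  refine le_antisymm ?_ ((Ideal.span_singleton_le_iff_mem _).mpr hx)
  refine Submodule.le_of_le_smul_of_le_jacobson_bot (IsNoetherian.noetherian _)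
    (maximalIdeal_le_jacobson ⊥) ?_
  rwa [smul_eq_mul, ← sq, sup_comm]

theorem exists_notMem_sq_sup_span_of_not_isPrincipal [IsNoetherianRing R]
    (h : ¬ (maximalIdeal R).IsPrincipal) :
    ∃ x ∈ maximalIdeal R, ∃ y ∈ maximalIdeal R,
      x ∉ maximalIdeal R ^ 2 ∧ y ∉ maximalIdeal R ^ 2 ⊔ Ideal.span {x} := by
  have not_le (x : R) (hx : x ∈ maximalIdeal R) :
      ¬ maximalIdeal R ≤ maximalIdeal R ^ 2 ⊔ Ideal.span {x} :=
    fun hle ↦ h ⟨x, maximalIdeal_eq_span_of_le_sq_sup hx hle⟩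
  obtain ⟨x, hx, hx2⟩ := Set.not_subset.mp (not_le 0 (zero_mem _))
  obtain ⟨y, hy, hy2⟩ := Set.not_subset.mp (not_le x hx)
  exact ⟨x, hx, y, hy, fun h ↦ hx2 (Submodule.mem_sup_left h), hy2⟩

end LocalRing

section Algebra

variable {K R : Type*} [Field K] [CommRing R] [Algebra K R]

theorem eq_zero_of_smul_add_smul_mem {I : Ideal R} {x y : R} (hx : x ∉ I)
    (hy : y ∉ I ⊔ Ideal.span {x}) {a b : K} (h : a • x + b • y ∈ I) : a = 0 ∧ b = 0 := by
  have hb : b = 0 := by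
    by_contra hb
    refine hy ?_
    have hby : b • y ∈ I ⊔ Ideal.span {x} := by
      rw [← add_sub_cancel_left (a • x) (b • y)]
      refine sub_mem (Submodule.mem_sup_left h) (Submodule.mem_sup_right ?_)
      exact Submodule.smul_of_tower_mem _ a (Ideal.mem_span_singleton_self x)
    simpa [inv_smul_smul₀ hb] using Submodule.smul_of_tower_mem _ b⁻¹ hby
  subst hb
  refine ⟨?_, rfl⟩
  by_contra ha
  rw [zero_smul, add_zero] at h
  exact hx (by simpa [inv_smul_smul₀ ha] using Submodule.smul_of_tower_mem _ a⁻¹ h)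

variable [IsLocalRing R]

theorem exists_sub_algebraMap_mem_maximalIdeal [IsAlgClosed K] [FiniteDimensional K R] (u : R) :
    ∃ c : K, u - algebraMap K R c ∈ maximalIdeal R := by
  obtain ⟨c, hc⟩ := (IsAlgClosed.algebraMap_bijective_of_isIntegral
    (k := K) (K := R ⧸ maximalIdeal R)).2 (Ideal.Quotient.mk _ u)
  exact ⟨c, Ideal.Quotient.eq.mp hc.symm⟩

theorem injective_orbit_add_smul [IsAlgClosed K] [FiniteDimensional K R] {x y : R}
    (hx : x ∈ maximalIdeal R) (hy : y ∈ maximalIdeal R) (hx2 : x ∉ maximalIdeal R ^ 2)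
    (hy2 : y ∉ maximalIdeal R ^ 2 ⊔ Ideal.span {x}) :
    Function.Injective (fun c : K ↦ (⟦x + c • y⟧ : orbitRel.Quotient Rˣ R)) := by
  intro c c' hcc
  obtain ⟨u, hu⟩ := mem_orbit_iff.mp (Quotient.exact hcc)
  obtain ⟨c₀, hc₀⟩ := exists_sub_algebraMap_mem_maximalIdeal (K := K) (u : R)
  have hmem : (c₀ - 1) • x + (c₀ * c' - c) • y ∈ maximalIdeal R ^ 2 := by
    have hw : ((u : R) - algebraMap K R c₀) * (x + c' • y) ∈ maximalIdeal R ^ 2 :=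
      sq (maximalIdeal R) ▸ Ideal.mul_mem_mul hc₀
        (add_mem hx (Submodule.smul_of_tower_mem _ c' hy))
    rw [Units.smul_def, smul_eq_mul] at hu
    convert neg_mem hw using 1
    simp only [Algebra.smul_def, map_sub, map_mul, map_one] at hu ⊢
    linear_combination hu
  obtain ⟨h₁, h₂⟩ := eq_zero_of_smul_add_smul_mem hx2 hy2 hmem
  rw [sub_eq_zero.mp h₁, one_mul, sub_eq_zero] at h₂
  exact h₂.symm

theorem isPrincipal_maximalIdeal_of_finite_orbitRel_quotient [IsAlgClosed K]
    [FiniteDimensional K R] [Finite (orbitRel.Quotient Rˣ R)] : (maximalIdeal R).IsPrincipal := by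
  have := IsArtinianRing.of_finite K R
  by_contra h
  obtain ⟨x, hx, y, hy, hx2, hy2⟩ := exists_notMem_sq_sup_span_of_not_isPrincipal h
  have := Finite.of_injective _ (injective_orbit_add_smul (K := K) hx hy hx2 hy2)
  exact _root_.not_finite K

end Algebra

section Generator

variable {K R : Type*} [Field K] [CommRing R] [Algebra K R]

theorem maximalIdeal_eq_span_of_forall_eq_algebraMap_add_mul [IsLocalRing R] {t : R}
    (hnil : IsNilpotent t) (h : ∀ a : R, ∃ (c : K) (b : R), a = algebraMap K R c + t * b) :
    maximalIdeal R = Ideal.span {t} := by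
  refine le_antisymm (fun a ha ↦ ?_) ((Ideal.span_singleton_le_iff_mem _).mpr ?_)
  · obtain ⟨c, b, rfl⟩ := h a
    obtain rfl : c = 0 := by
      by_contra hc
      refine (mem_maximalIdeal _).mp ha ?_
      exact (((Commute.all t b).isNilpotent_mul_right hnil).isUnit_add_left_of_commute
        ((isUnit_iff_ne_zero.mpr hc).map (algebraMap K R)) (Commute.all _ _))
    simpa using Ideal.mul_mem_right b _ (Ideal.mem_span_singleton_self t)
  · exact (mem_maximalIdeal t).mpr hnil.not_isUnit

theorem forall_eq_algebraMap_add_mul_of_maximalIdeal_eq_span [IsLocalRing R] [IsAlgClosed K]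
    [FiniteDimensional K R] {t : R} (ht : maximalIdeal R = Ideal.span {t}) (a : R) :
    ∃ (c : K) (b : R), a = algebraMap K R c + t * b := by
  obtain ⟨c, hc⟩ := exists_sub_algebraMap_mem_maximalIdeal (K := K) a
  rw [ht] at hc
  obtain ⟨b, hb⟩ := Ideal.mem_span_singleton'.mp hc
  exact ⟨c, b, by rw [mul_comm, hb, add_sub_cancel]⟩

theorem aeval_surjective_of_forall_eq_algebraMap_add_mul {t : R} (hnil : IsNilpotent t)
    (h : ∀ a : R, ∃ (c : K) (b : R), a = algebraMap K R c + t * b) :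
    Function.Surjective (aeval t : K[X] →ₐ[K] R) := by
  have approx (k : ℕ) (a : R) : ∃ (p : K[X]) (b : R), a = aeval t p + t ^ k * b := by
    induction k generalizing a with
    | zero => exact ⟨0, a, by simp⟩
    | succ k ih =>
      obtain ⟨p, b, rfl⟩ := ih a
      obtain ⟨c, b', rfl⟩ := h b
      exact ⟨p + C c * X ^ k, b', by simp only [map_add, map_mul, aeval_C, map_pow, aeval_X]; ring⟩
  obtain ⟨N, htN⟩ := hnil
  intro a
  obtain ⟨p, b, rfl⟩ := approx N a
  exact ⟨p, by simp [htN]⟩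

theorem minpoly_eq_X_pow_natDegree_of_isNilpotent [FiniteDimensional K R] {t : R}
    (hnil : IsNilpotent t) : minpoly K t = X ^ (minpoly K t).natDegree := by
  obtain ⟨N, htN⟩ := hnil
  have hdvd : minpoly K t ∣ X ^ N := minpoly.dvd K t (by simp [htN])
  obtain ⟨i, -, hassoc⟩ := (dvd_prime_pow prime_X N).mp hdvd
  have hmonic := minpoly.monic (Algebra.IsIntegral.isIntegral (R := K) t)
  rw [eq_of_monic_of_associated hmonic (monic_X_pow i) hassoc, natDegree_X_pow]

theorem nonempty_algEquiv_quotient_span_X_pow [FiniteDimensional K R] {n : ℕ}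
    (hdim : Module.finrank K R = n) {t : R} (hnil : IsNilpotent t)
    (hsurj : Function.Surjective (aeval t : K[X] →ₐ[K] R)) :
    Nonempty (R ≃ₐ[K] K[X] ⧸ Ideal.span {(X : K[X]) ^ n}) := by
  have hker : RingHom.ker (aeval t : K[X] →ₐ[K] R) = Ideal.span {minpoly K t} :=
    minpoly.ker_aeval_eq_span_minpoly K t
  let e : (K[X] ⧸ Ideal.span {minpoly K t}) ≃ₐ[K] R :=
    (Ideal.quotientEquivAlgOfEq K hker.symm).trans (Ideal.quotientKerAlgEquivOfSurjective hsurj)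
  have hdeg : (minpoly K t).natDegree = n := by
    rw [← finrank_quotient_span_eq_natDegree, e.toLinearEquiv.finrank_eq, hdim]
  have hX : minpoly K t = X ^ n := hdeg ▸ minpoly_eq_X_pow_natDegree_of_isNilpotent hnil
  exact ⟨e.symm.trans (Ideal.quotientEquivAlgOfEq K (by rw [hX]))⟩

theorem forall_eq_algebraMap_add_mul_of_algEquiv_quotient {n : ℕ}
    (e : R ≃ₐ[K] K[X] ⧸ Ideal.span {(X : K[X]) ^ n}) (a : R) :
    ∃ (c : K) (b : R), a = algebraMap K R c + e.symm (Ideal.Quotient.mk _ X) * b := by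
  obtain ⟨f, hf⟩ := Ideal.Quotient.mk_surjective (e a)
  refine ⟨f.coeff 0, e.symm (Ideal.Quotient.mk _ f.divX), e.injective ?_⟩
  rw [map_add, map_mul, AlgEquiv.commutes, AlgEquiv.apply_symm_apply, AlgEquiv.apply_symm_apply,
    ← hf, ← Ideal.Quotient.mk_algebraMap, ← map_mul, ← map_add, ← C_eq_algebraMap, add_comm,
    X_mul_divX_add]

end Generator

theorem stmt7_general (K R : Type*) [Field K] [IsAlgClosed K]
    [CommRing R] [Algebra K R] [IsLocalRing R] [FiniteDimensional K R]
    (n : ℕ) (hdim : Module.finrank K R = n + 1) :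
    Finite (MulAction.orbitRel.Quotient Rˣ R) ↔
      Nonempty (R ≃ₐ[K]
        (Polynomial K ⧸ Ideal.span {(Polynomial.X : Polynomial K) ^ (n + 1)})) := by
  constructor
  · intro hfin
    have := IsArtinianRing.of_finite K R
    obtain ⟨t, ht⟩ :=
      (isPrincipal_maximalIdeal_of_finite_orbitRel_quotient (K := K) (R := R)).principal
    have ht : maximalIdeal R = Ideal.span {t} := ht
    have hnil := isNilpotent_of_mem_maximalIdeal (ht ▸ Ideal.mem_span_singleton_self t)
    exact nonempty_algEquiv_quotient_span_X_pow hdim hnil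
      (aeval_surjective_of_forall_eq_algebraMap_add_mul hnil
        (forall_eq_algebraMap_add_mul_of_maximalIdeal_eq_span ht))
  · rintro ⟨e⟩
    have hnil : IsNilpotent (e.symm (Ideal.Quotient.mk _ X)) :=
      ⟨n + 1, by rw [← map_pow, ← map_pow, Ideal.Quotient.eq_zero_iff_mem.mpr
        (Ideal.mem_span_singleton_self _), map_zero]⟩
    exact finite_orbitRel_quotient_units_of_maximalIdeal_eq_span
      (maximalIdeal_eq_span_of_forall_eq_algebraMap_add_mul hnil
        (forall_eq_algebraMap_add_mul_of_algEquiv_quotient e)) hnil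

/-- let `K` be algebraically closed of characteristic zero, `n ≥ 1`, and `R` a
commutative local `K`-algebra of dimension `n+1`. The multiplication action of the unit group
`Rˣ` on `R` has finitely many orbits if and only if `R ≅ K[x]/(x^{n+1})`. -/
theorem stmt7 (K R : Type*) [Field K] [IsAlgClosed K] [CharZero K]
    [CommRing R] [Algebra K R] [IsLocalRing R] [FiniteDimensional K R]
    (n : ℕ) (hn : 1 ≤ n) (hdim : Module.finrank K R = n + 1) :
    Finite (MulAction.orbitRel.Quotient Rˣ R) ↔
      Nonempty (R ≃ₐ[K]
        (Polynomial K ⧸ Ideal.span {(Polynomial.X : Polynomial K) ^ (n + 1)})) :=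
  stmt7_general K R n hdim
end

section
/- Let R be a finite-dimensional commutative local associative unital algebra over a field K of characteristic zero, with maximal ideal m, and suppose v_1, …, v_n is a K-basis of m such that for all indices s ≥ 1 and p ≥ 2 with s + p ≤ n there exists an element w ∈ m with v_{s+p} = v_s·w and with v_{s+1}·w equal either to 0 or to v_r for some r ≥ s + p + 1. Then for every s and all scalars α_1, …, α_{n−s} ∈ K, the element v_s + Σ_{p=1}^{n−s} α_p v_{s+p} is associated to v_s + α_1 v_{s+1}, i.e., there exists a unit c ∈ R^× with v_s + Σ_{p=1}^{n−s} α_p v_{s+p} = (v_s + α_1 v_{s+1})·c. -/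
/-- suppose `v 1, …, v n` is a `K`-basis of the maximal ideal `m` of a
finite-dimensional commutative local algebra `R` over a field of characteristic zero, such that
for all `s ≥ 1`, `p ≥ 2` with `s + p ≤ n` there is `w ∈ m` with `v (s+p) = v s * w` and
`v (s+1) * w` equal to `0` or to some `v r` with `r ≥ s + p + 1`.  Then for every `s` with
`1 ≤ s ≤ n` and all scalars `α`, the element `v s + Σ_{p=1}^{n-s} α p • v (s+p)` is associated
to `v s + α 1 • v (s+1)` (the latter written as `v s + Σ_{p=1}^{min (n-s) 1} α p • v (s+p)` so
that it degenerates to `v s` when `s = n`). -/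
theorem stmt9 (K R : Type*) [Field K] [CharZero K] [CommRing R] [Algebra K R]
    [IsLocalRing R] [FiniteDimensional K R]
    (n : ℕ) (v : ℕ → R)
    (hmem : ∀ s ∈ Finset.Icc 1 n, v s ∈ IsLocalRing.maximalIdeal R)
    (hli : LinearIndependent K (fun s : (Set.Icc 1 n : Set ℕ) => v (s : ℕ)))
    (hspan : Submodule.span K (v '' Set.Icc 1 n) =
      (IsLocalRing.maximalIdeal R).restrictScalars K)
    (hw : ∀ s p : ℕ, 1 ≤ s → 2 ≤ p → s + p ≤ n →
      ∃ w ∈ IsLocalRing.maximalIdeal R, v (s + p) = v s * w ∧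
        (v (s + 1) * w = 0 ∨ ∃ r : ℕ, s + p + 1 ≤ r ∧ r ≤ n ∧ v (s + 1) * w = v r)) :
    ∀ s : ℕ, 1 ≤ s → s ≤ n → ∀ α : ℕ → K, ∃ c : Rˣ,
      v s + ∑ p ∈ Finset.Icc 1 (n - s), α p • v (s + p) =
        (v s + ∑ p ∈ Finset.Icc 1 (min (n - s) 1), α p • v (s + p)) * c := by
  classical
  -- totalize the choice of `w`
  have hw' : ∀ s p : ℕ, ∃ w : R, 1 ≤ s → 2 ≤ p → s + p ≤ n →
      w ∈ IsLocalRing.maximalIdeal R ∧ v (s + p) = v s * w ∧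
        (v (s + 1) * w = 0 ∨ ∃ r : ℕ, s + p + 1 ≤ r ∧ r ≤ n ∧ v (s + 1) * w = v r) := by
    intro s p
    by_cases h : 1 ≤ s ∧ 2 ≤ p ∧ s + p ≤ n
    · obtain ⟨w, hw1, hw2, hw3⟩ := hw s p h.1 h.2.1 h.2.2
      exact ⟨w, fun _ _ _ => ⟨hw1, hw2, hw3⟩⟩
    · exact ⟨0, fun h1 h2 h3 => absurd ⟨h1, h2, h3⟩ h⟩
  choose W hW using hw'
  have isunit : ∀ u : R, u ∈ IsLocalRing.maximalIdeal R → IsUnit (1 + u) := by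
    intro u hu
    by_contra h
    have h1 : (1 : R) + u ∈ IsLocalRing.maximalIdeal R := h
    have h2 : (1 : R) ∈ IsLocalRing.maximalIdeal R := by
      have := Ideal.sub_mem _ h1 hu; simpa using this
    exact (Ideal.ne_top_iff_one _).mp
      (Ideal.IsMaximal.ne_top (IsLocalRing.maximalIdeal.isMaximal R)) h2
  intro s hs1 hsn α
  rcases eq_or_lt_of_le hsn with rfl | hlt
  · refine ⟨1, ?_⟩
    simp
  -- main induction
  set x := v s + α 1 • v (s + 1) with hx
  have key : ∀ k q : ℕ, 2 ≤ q → n < s + q + k →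
      ∀ e ∈ Submodule.span K (v '' Set.Icc (s + q) n),
      ∃ u ∈ IsLocalRing.maximalIdeal R, x + e = x * (1 + u) := by
    intro k
    induction k with
    | zero =>
      intro q hq hn e he
      have hempty : Set.Icc (s + q) n = ∅ := Set.Icc_eq_empty (by omega)
      rw [hempty] at he
      simp only [Set.image_empty, Submodule.span_empty, Submodule.mem_bot] at he
      exact ⟨0, Submodule.zero_mem _, by simp [he]⟩
    | succ k ih =>
      intro q hq hn e he
      rw [show Set.Icc (s + q) n = ↑(Finset.Icc (s + q) n) from (Finset.coe_Icc _ _).symm,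
        Finsupp.mem_span_image_iff_linearCombination] at he
      obtain ⟨l, hl, rfl⟩ := he
      rw [Finsupp.mem_supported] at hl
      set F := Finset.Icc (s + q) n with hF
      have hsupp : l.support ⊆ F := by exact_mod_cast hl
      have hes : Finsupp.linearCombination K v l = ∑ r ∈ F, l r • v r := by
        rw [Finsupp.linearCombination_apply]
        exact Finsupp.sum_of_support_subset l hsupp _ (by simp)
      have hWfact : ∀ r ∈ F, W s (r - s) ∈ IsLocalRing.maximalIdeal R ∧
          v r = v s * W s (r - s) ∧
          (v (s + 1) * W s (r - s) = 0 ∨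
            ∃ r' : ℕ, r + 1 ≤ r' ∧ r' ≤ n ∧ v (s + 1) * W s (r - s) = v r') := by
        intro r hr
        rw [hF, Finset.mem_Icc] at hr
        have h1 : 2 ≤ r - s := by omega
        have h2 : s + (r - s) ≤ n := by omega
        have h3 : s + (r - s) = r := by omega
        have := hW s (r - s) hs1 h1 h2
        rw [h3] at this
        obtain ⟨w1, w2, w3⟩ := this
        refine ⟨w1, w2, ?_⟩
        rcases w3 with h0 | ⟨r', hr'1, hr'2, hr'3⟩
        · exact Or.inl h0
        · exact Or.inr ⟨r', by omega, hr'2, hr'3⟩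
      set t := ∑ r ∈ F, l r • W s (r - s) with hts
      have ht : t ∈ IsLocalRing.maximalIdeal R := by
        show t ∈ (IsLocalRing.maximalIdeal R).restrictScalars K
        exact Submodule.sum_mem _ fun r hr =>
          Submodule.smul_mem _ _ (hWfact r hr).1
      have h1 : v s * t = ∑ r ∈ F, l r • v r := by
        rw [hts, Finset.mul_sum]
        refine Finset.sum_congr rfl fun r hr => ?_
        rw [mul_smul_comm, ← (hWfact r hr).2.1]
      set e' := ∑ r ∈ F, (α 1 * l r) • (v (s + 1) * W s (r - s)) with he's
      have h2 : (α 1 • v (s + 1)) * t = e' := by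
        rw [hts, Finset.mul_sum, he's]
        refine Finset.sum_congr rfl fun r hr => ?_
        rw [smul_mul_smul_comm]
      have he' : e' ∈ Submodule.span K (v '' Set.Icc (s + (q + 1)) n) := by
        refine Submodule.sum_mem _ fun r hr => ?_
        rcases (hWfact r hr).2.2 with h0 | ⟨r', hr'1, hr'2, hr'3⟩
        · rw [h0, smul_zero]; exact Submodule.zero_mem _
        · rw [hr'3]
          refine Submodule.smul_mem _ _ (Submodule.subset_span ⟨r', ⟨?_, hr'2⟩, rfl⟩)
          rw [hF, Finset.mem_Icc] at hr; omega
      obtain ⟨u', hu', hIH⟩ := ih (q + 1) (by omega) (by omega) (-e')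
        (Submodule.neg_mem _ he')
      refine ⟨t + u', Ideal.add_mem _ ht hu', ?_⟩
      have hx2 : x * t = (∑ r ∈ F, l r • v r) + e' := by
        rw [hx, add_mul, h1, h2]
      rw [hes]
      linear_combination hIH - hx2
  have hmin : min (n - s) 1 = 1 := by omega
  have hins : Finset.Icc 1 (n - s) = insert 1 (Finset.Icc 2 (n - s)) := by
    ext p
    simp only [Finset.mem_Icc, Finset.mem_insert]
    omega
  have he : (∑ p ∈ Finset.Icc 2 (n - s), α p • v (s + p)) ∈
      Submodule.span K (v '' Set.Icc (s + 2) n) := by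
    refine Submodule.sum_mem _ fun p hp => ?_
    rw [Finset.mem_Icc] at hp
    exact Submodule.smul_mem _ _
      (Submodule.subset_span ⟨s + p, ⟨by omega, by omega⟩, rfl⟩)
  obtain ⟨u, hu, heq⟩ := key (n + 1) 2 le_rfl (by omega) _ he
  refine ⟨(isunit u hu).unit, ?_⟩
  rw [IsUnit.unit_spec, hmin, Finset.Icc_self, Finset.sum_singleton, hins,
    Finset.sum_insert (by simp)]
  rw [hx] at heq
  linear_combination heq
end

section
/- Let K be a field of characteristic zero and let H = K[x,y]/(x^4, y^2, x^2 y), with X, Y denoting the images of x, y. Then for any two distinct pairs (a,b) ≠ (a',b') in K × K, the elements X^2 + aY + bXY and X^2 + a'Y + b'XY of H are not associated: there is no unit c ∈ H^× with X^2 + aY + bXY = (X^2 + a'Y + b'XY)·c. (Hence H admits a two-parameter continuous family of association classes, so its modality is greater than one.) -/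
open MvPolynomial

/-- The algebra `H = K[x,y]/(x⁴, y², x²y)`. -/
abbrev Halg (K : Type*) [Field K] : Type _ :=
  MvPolynomial (Fin 2) K ⧸
    Ideal.span {(X 0 : MvPolynomial (Fin 2) K) ^ 4, (X 1 : MvPolynomial (Fin 2) K) ^ 2,
      (X 0 : MvPolynomial (Fin 2) K) ^ 2 * X 1}

/-- The image of `x` in `H`. -/
noncomputable def HX (K : Type*) [Field K] : Halg K :=
  Ideal.Quotient.mk _ (X 0 : MvPolynomial (Fin 2) K)

/-- The image of `y` in `H`. -/
noncomputable def HY (K : Type*) [Field K] : Halg K :=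
  Ideal.Quotient.mk _ (X 1 : MvPolynomial (Fin 2) K)

/-- Elements of the ideal `(x⁴, y², x²y)` have vanishing coefficients on all monomials not
divisible by one of the generators. -/
lemma stmt10_key {K : Type*} [Field K] {p : MvPolynomial (Fin 2) K}
    (hp : p ∈ Ideal.span {(X 0 : MvPolynomial (Fin 2) K) ^ 4, (X 1 : MvPolynomial (Fin 2) K) ^ 2,
      (X 0 : MvPolynomial (Fin 2) K) ^ 2 * X 1})
    (m : Fin 2 →₀ ℕ) (h0 : m 0 ≤ 3) (h1 : m 1 ≤ 1) (h2 : ¬ (2 ≤ m 0 ∧ 1 ≤ m 1)) :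
    coeff m p = 0 := by
  rw [show ({(X 0 : MvPolynomial (Fin 2) K) ^ 4, (X 1 : MvPolynomial (Fin 2) K) ^ 2,
      (X 0 : MvPolynomial (Fin 2) K) ^ 2 * X 1} : Set (MvPolynomial (Fin 2) K)) =
      insert ((X 0)^4) (insert ((X 1)^2) {(X 0)^2 * X 1}) from rfl] at hp
  rw [Ideal.mem_span_insert] at hp
  obtain ⟨q1, z1, hz1, rfl⟩ := hp
  rw [Ideal.mem_span_insert] at hz1
  obtain ⟨q2, z2, hz2, rfl⟩ := hz1
  rw [Ideal.mem_span_singleton'] at hz2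
  obtain ⟨q3, rfl⟩ := hz2
  have e1 : (X 0 : MvPolynomial (Fin 2) K)^4 = monomial (Finsupp.single 0 4) 1 :=
    X_pow_eq_monomial ..
  have e2 : (X 1 : MvPolynomial (Fin 2) K)^2 = monomial (Finsupp.single 1 2) 1 :=
    X_pow_eq_monomial ..
  have e3 : (X 0 : MvPolynomial (Fin 2) K)^2 * X 1 =
      monomial (Finsupp.single 0 2 + Finsupp.single 1 1) 1 := by
    rw [X_pow_eq_monomial, X, monomial_mul, one_mul]
  rw [e1, e2, e3]
  rw [coeff_add, coeff_add, coeff_mul_monomial', coeff_mul_monomial', coeff_mul_monomial']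
  rw [if_neg, if_neg, if_neg]
  · ring
  · intro h; rw [Finsupp.le_def] at h; have := h 0; have := h 1
    simp [Finsupp.single_apply] at *; omega
  · intro h; rw [Finsupp.single_le_iff] at h; omega
  · intro h; rw [Finsupp.single_le_iff] at h; omega

/-- in `H = K[x,y]/(x⁴, y², x²y)`, for distinct pairs `(a,b) ≠ (a',b')` the
elements `x² + a·y + b·xy` and `x² + a'·y + b'·xy` are not associated. -/
theorem stmt10 (K : Type*) [Field K] [CharZero K]
    (a b a' b' : K) (hne : (a, b) ≠ (a', b')) :
    ¬ ∃ c : (Halg K)ˣ,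
      HX K ^ 2 + a • HY K + b • (HX K * HY K) =
        (HX K ^ 2 + a' • HY K + b' • (HX K * HY K)) * c := by
  rintro ⟨c, hc⟩
  set I : Ideal (MvPolynomial (Fin 2) K) :=
    Ideal.span {(X 0 : MvPolynomial (Fin 2) K) ^ 4, (X 1 : MvPolynomial (Fin 2) K) ^ 2,
      (X 0 : MvPolynomial (Fin 2) K) ^ 2 * X 1} with hI
  obtain ⟨p, hp⟩ := Ideal.Quotient.mk_surjective (I := I) (c : Halg K)
  set L : MvPolynomial (Fin 2) K := X 0 ^ 2 + a • X 1 + b • (X 0 * X 1) with hL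
  set R : MvPolynomial (Fin 2) K := X 0 ^ 2 + a' • X 1 + b' • (X 0 * X 1) with hR
  have hmem : L - R * p ∈ I := by
    rw [← Ideal.Quotient.eq]
    have hmk : ∀ q : MvPolynomial (Fin 2) K, Ideal.Quotient.mk I q
        = Ideal.Quotient.mkₐ K I q := fun q => rfl
    rw [hL, hR]
    simp only [map_mul, map_add, hmk, map_smul, map_pow]
    rw [← hmk, ← hmk, ← hmk, hp]
    exact hc
  -- rewrite L and R in monomial form
  have eL : L = monomial (Finsupp.single 0 2) 1
      + monomial (Finsupp.single 1 1) a
      + monomial (Finsupp.single 0 1 + Finsupp.single 1 1) b := by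
    rw [hL, X_pow_eq_monomial]
    rw [show (X 0 : MvPolynomial (Fin 2) K) * X 1 =
        monomial (Finsupp.single 0 1 + Finsupp.single 1 1) 1 by
      rw [X, X, monomial_mul, one_mul]]
    rw [show (X 1 : MvPolynomial (Fin 2) K) = monomial (Finsupp.single 1 1) 1 from rfl]
    rw [smul_monomial, smul_monomial, smul_eq_mul, smul_eq_mul, mul_one, mul_one]
  have eR : R = monomial (Finsupp.single 0 2) 1
      + monomial (Finsupp.single 1 1) a'
      + monomial (Finsupp.single 0 1 + Finsupp.single 1 1) b' := by
    rw [hR, X_pow_eq_monomial]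
    rw [show (X 0 : MvPolynomial (Fin 2) K) * X 1 =
        monomial (Finsupp.single 0 1 + Finsupp.single 1 1) 1 by
      rw [X, X, monomial_mul, one_mul]]
    rw [show (X 1 : MvPolynomial (Fin 2) K) = monomial (Finsupp.single 1 1) 1 from rfl]
    rw [smul_monomial, smul_monomial, smul_eq_mul, smul_eq_mul, mul_one, mul_one]
  rw [eL, eR] at hmem
  -- extract the four relevant coefficients
  have h2 := stmt10_key hmem (Finsupp.single 0 2) (by simp) (by simp) (by simp)
  have h3 := stmt10_key hmem (Finsupp.single 0 3) (by simp) (by simp) (by simp)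
  have hy := stmt10_key hmem (Finsupp.single 1 1) (by simp) (by simp) (by simp)
  have hxy := stmt10_key hmem (Finsupp.single 0 1 + Finsupp.single 1 1)
    (by simp) (by simp) (by simp [Finsupp.single_apply])
  simp only [add_mul, coeff_sub, coeff_add, coeff_monomial_mul', coeff_monomial,
    Finsupp.le_def, Fin.forall_fin_two, Finsupp.single_apply, Finsupp.add_apply,
    Finsupp.ext_iff] at h2 h3 hy hxy
  norm_num at h2 h3 hy hxy
  -- h2 : coeff 0 p = 1, h3 : coeff (x) p = 0, hy : a = a' * coeff 0 p, hxy : b = ...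
  apply hne
  have hd : (Finsupp.single 0 3 - Finsupp.single 0 2 : Fin 2 →₀ ℕ) = Finsupp.single 0 1 := by
    ext i
    simp [Finsupp.single_apply]
    split <;> rfl
  rw [hd] at h3
  rw [sub_eq_zero] at h2 hy hxy
  rw [h3, ← h2] at hxy
  rw [← h2, mul_one] at hy
  simp at hxy
  exact Prod.ext hy hxy
end

section
/- Let K be a field of characteristic zero. Then the K-algebras K[x,y]/(y^2, x^3 y, x^3 − x^2 y) and K[x,y]/(x^3, y^2) are isomorphic as K-algebras (an isomorphism is induced by x ↦ −3x + y, y ↦ y). -/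
open MvPolynomial

/-- `K[x,y]/(y², x³y, x³ − x²y)` and `K[x,y]/(x³, y²)` are isomorphic
`K`-algebras (an isomorphism is induced by `x ↦ −3x + y`, `y ↦ y`). -/
theorem stmt13 (K : Type*) [Field K] [CharZero K] :
    Nonempty
      ((MvPolynomial (Fin 2) K ⧸
          Ideal.span {(X 1 : MvPolynomial (Fin 2) K) ^ 2,
            (X 0 : MvPolynomial (Fin 2) K) ^ 3 * X 1,
            (X 0 : MvPolynomial (Fin 2) K) ^ 3 - X 0 ^ 2 * X 1})
        ≃ₐ[K]
       (MvPolynomial (Fin 2) K ⧸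
          Ideal.span {(X 0 : MvPolynomial (Fin 2) K) ^ 3,
            (X 1 : MvPolynomial (Fin 2) K) ^ 2})) := by
  classical
  set c : MvPolynomial (Fin 2) K := C (3⁻¹ : K) with hc_def
  have hc : c * 3 = 1 := by
    rw [hc_def, show ((3 : MvPolynomial (Fin 2) K) = C (3 : K)) from (map_ofNat C 3).symm,
      ← map_mul]
    norm_num
  set I₁ : Ideal (MvPolynomial (Fin 2) K) :=
    Ideal.span {(X 1 : MvPolynomial (Fin 2) K) ^ 2,
      (X 0 : MvPolynomial (Fin 2) K) ^ 3 * X 1,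
      (X 0 : MvPolynomial (Fin 2) K) ^ 3 - X 0 ^ 2 * X 1} with hI1
  set I₂ : Ideal (MvPolynomial (Fin 2) K) :=
    Ideal.span {(X 0 : MvPolynomial (Fin 2) K) ^ 3,
      (X 1 : MvPolynomial (Fin 2) K) ^ 2} with hI2
  have h1 : ((X 1 : MvPolynomial (Fin 2) K) ^ 2) ∈ I₁ := Ideal.subset_span (by simp)
  have h3 : ((X 0 : MvPolynomial (Fin 2) K) ^ 3 - X 0 ^ 2 * X 1) ∈ I₁ :=
    Ideal.subset_span (by simp)
  set f₀ : MvPolynomial (Fin 2) K →ₐ[K] MvPolynomial (Fin 2) K :=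
    aeval ![c * (X 1 - X 0), X 1] with hf0
  set g₀ : MvPolynomial (Fin 2) K →ₐ[K] MvPolynomial (Fin 2) K :=
    aeval ![X 1 - 3 * X 0, X 1] with hg0
  have hf0x : f₀ (X 0) = c * (X 1 - X 0) := by simp [hf0]
  have hf0y : f₀ (X 1) = X 1 := by simp [hf0]
  have hg0x : g₀ (X 0) = X 1 - 3 * X 0 := by simp [hg0]
  have hg0y : g₀ (X 1) = X 1 := by simp [hg0]
  have hg0c : g₀ c = c := by simp [hg0, hc_def, algebraMap_eq]
  -- f₀ maps I₁ into I₂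
  have hfdesc : ∀ a ∈ I₁, ((Ideal.Quotient.mkₐ K I₂).comp f₀) a = 0 := by
    have hker : I₁ ≤ RingHom.ker ((Ideal.Quotient.mkₐ K I₂).comp f₀).toRingHom := by
      rw [hI1, Ideal.span_le]
      rintro p hp
      simp only [Set.mem_insert_iff, Set.mem_singleton_iff] at hp
      have key : ∀ q : MvPolynomial (Fin 2) K, f₀ q ∈ I₂ →
          ((Ideal.Quotient.mkₐ K I₂).comp f₀) q = 0 := by
        intro q hq
        exact Ideal.Quotient.eq_zero_iff_mem.mpr hq
      rcases hp with rfl | rfl | rfl <;> refine key _ ?_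
      · rw [map_pow, hf0y]
        exact Ideal.mem_span_pair.mpr ⟨0, 1, by ring⟩
      · rw [map_mul, map_pow, hf0x, hf0y]
        exact Ideal.mem_span_pair.mpr
          ⟨c ^ 3 * (-X 1), c ^ 3 * (X 1 ^ 2 - 3 * X 0 * X 1 + 3 * X 0 ^ 2), by ring⟩
      · rw [map_sub, map_mul, map_pow, map_pow, hf0x, hf0y]
        refine Ideal.mem_span_pair.mpr
          ⟨-c ^ 3, (-3 * c ^ 3 + 2 * c ^ 2) * X 0 + (c ^ 3 - c ^ 2) * X 1, ?_⟩
        linear_combination (-(c ^ 2) * X 0 ^ 2 * X 1) * hc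
    intro a ha
    exact hker ha
  -- g₀ maps I₂ into I₁
  have hgdesc : ∀ a ∈ I₂, ((Ideal.Quotient.mkₐ K I₁).comp g₀) a = 0 := by
    have hker : I₂ ≤ RingHom.ker ((Ideal.Quotient.mkₐ K I₁).comp g₀).toRingHom := by
      rw [hI2, Ideal.span_le]
      rintro p hp
      simp only [Set.mem_insert_iff, Set.mem_singleton_iff] at hp
      have key : ∀ q : MvPolynomial (Fin 2) K, g₀ q ∈ I₁ →
          ((Ideal.Quotient.mkₐ K I₁).comp g₀) q = 0 := by
        intro q hq
        exact Ideal.Quotient.eq_zero_iff_mem.mpr hq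
      rcases hp with rfl | rfl <;> refine key _ ?_
      · rw [map_pow, hg0x]
        have : (X 1 - 3 * X 0 : MvPolynomial (Fin 2) K) ^ 3 =
            (X 1 - 9 * X 0) * X 1 ^ 2 + (-27) * (X 0 ^ 3 - X 0 ^ 2 * X 1) := by ring
        rw [this]
        exact I₁.add_mem (I₁.mul_mem_left _ h1) (I₁.mul_mem_left _ h3)
      · rw [map_pow, hg0y]
        exact h1
    intro a ha
    exact hker ha
  set f : (MvPolynomial (Fin 2) K ⧸ I₁) →ₐ[K] (MvPolynomial (Fin 2) K ⧸ I₂) :=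
    Ideal.Quotient.liftₐ I₁ ((Ideal.Quotient.mkₐ K I₂).comp f₀) hfdesc with hf
  set g : (MvPolynomial (Fin 2) K ⧸ I₂) →ₐ[K] (MvPolynomial (Fin 2) K ⧸ I₁) :=
    Ideal.Quotient.liftₐ I₂ ((Ideal.Quotient.mkₐ K I₁).comp g₀) hgdesc with hg
  have hfmk : ∀ p, f (Ideal.Quotient.mkₐ K I₁ p) = Ideal.Quotient.mkₐ K I₂ (f₀ p) := by
    intro p
    rw [hf]
    exact AlgHom.congr_fun (Ideal.Quotient.liftₐ_comp I₁ _ hfdesc) p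
  have hgmk : ∀ p, g (Ideal.Quotient.mkₐ K I₂ p) = Ideal.Quotient.mkₐ K I₁ (g₀ p) := by
    intro p
    rw [hg]
    exact AlgHom.congr_fun (Ideal.Quotient.liftₐ_comp I₂ _ hgdesc) p
  refine ⟨AlgEquiv.ofAlgHom f g ?_ ?_⟩
  · apply Ideal.Quotient.algHom_ext
    apply MvPolynomial.algHom_ext
    intro i
    fin_cases i
    · show f (g (Ideal.Quotient.mkₐ K I₂ (X 0))) = Ideal.Quotient.mkₐ K I₂ (X 0)
      rw [hgmk, hg0x, hfmk]
      congr 1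
      simp only [map_sub, map_mul, map_ofNat, hf0x, hf0y]
      linear_combination (X 0 - X 1) * hc
    · show f (g (Ideal.Quotient.mkₐ K I₂ (X 1))) = Ideal.Quotient.mkₐ K I₂ (X 1)
      rw [hgmk, hg0y, hfmk, hf0y]
  · apply Ideal.Quotient.algHom_ext
    apply MvPolynomial.algHom_ext
    intro i
    fin_cases i
    · show g (f (Ideal.Quotient.mkₐ K I₁ (X 0))) = Ideal.Quotient.mkₐ K I₁ (X 0)
      rw [hfmk, hf0x, hgmk]
      congr 1
      simp only [map_mul, map_sub, map_ofNat, hg0c, hg0x, hg0y]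
      linear_combination X 0 * hc
    · show g (f (Ideal.Quotient.mkₐ K I₁ (X 1))) = Ideal.Quotient.mkₐ K I₁ (X 1)
      rw [hfmk, hf0y, hgmk, hg0y]
end

section
/- Let R be a finite-dimensional commutative local associative unital algebra over a field K of characteristic zero, with maximal ideal m, let U ⊆ m be a K-subspace that generates R as a K-algebra, and let B be a symmetric K-bilinear form on R such that B(u·b, c) + B(b, u·c) = 0 for all u ∈ U and b, c ∈ R. Then the radical rad(B) = {c ∈ R : B(c, x) = 0 for all x ∈ R} is an ideal of R. If moreover U is a hyperplane in m (a subspace of codimension 1 in m), B(1,1) = 0, and the rank of B is at least 3 (i.e., dim_K R − dim_K rad(B) ≥ 3), then rad(B) ⊆ U. -/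
/-- let `R` be a finite-dimensional commutative local `K`-algebra with maximal
ideal `m`, `U ⊆ m` a generating subspace, and `B` a symmetric bilinear form on `R` with
`B(u·b, c) + B(b, u·c) = 0` for all `u ∈ U`, `b, c ∈ R`.  Then the radical `ker B` of `B` is
an ideal of `R`; and if moreover `U` is a hyperplane in `m`, `B(1,1) = 0` and `rank B ≥ 3`,
then `ker B ⊆ U`. -/
theorem stmt15 (K R : Type*) [Field K] [CharZero K] [CommRing R] [Algebra K R]
    [IsLocalRing R] [FiniteDimensional K R]
    (U : Submodule K R)
    (hUm : U ≤ (IsLocalRing.maximalIdeal R).restrictScalars K)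
    (hgen : Algebra.adjoin K (U : Set R) = ⊤)
    (B : R →ₗ[K] R →ₗ[K] K)
    (hsym : ∀ x y : R, B x y = B y x)
    (hskew : ∀ u ∈ U, ∀ b c : R, B (u * b) c + B b (u * c) = 0) :
    (∀ c ∈ LinearMap.ker B, ∀ r : R, r * c ∈ LinearMap.ker B) ∧
    ((Module.finrank K U + 1 =
        Module.finrank K ↥((IsLocalRing.maximalIdeal R).restrictScalars K)) →
      B 1 1 = 0 →
      Module.finrank K ↥(LinearMap.ker B) + 3 ≤ Module.finrank K R →
      ∀ c ∈ LinearMap.ker B, c ∈ U) := by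
  -- Part 1: the kernel is an ideal.
  have part1 : ∀ c ∈ LinearMap.ker B, ∀ r : R, r * c ∈ LinearMap.ker B := by
    intro c hc r
    have hr : r ∈ Algebra.adjoin K (U : Set R) := by rw [hgen]; exact Algebra.mem_top
    induction hr using Algebra.adjoin_induction generalizing c with
    | mem u hu =>
        rw [LinearMap.mem_ker]
        ext x
        have h := hskew u hu c x
        have hc0 : B c = 0 := LinearMap.mem_ker.mp hc
        rw [hc0] at h
        simpa using h
    | algebraMap a =>
        rw [Algebra.algebraMap_eq_smul_one, smul_mul_assoc, one_mul]
        exact Submodule.smul_mem _ a hc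
    | add x y hx hy ihx ihy =>
        rw [add_mul]
        exact Submodule.add_mem _ (ihx c hc) (ihy c hc)
    | mul x y hx hy ihx ihy =>
        rw [mul_assoc]
        exact ihx (y * c) (ihy c hc)
  refine ⟨part1, ?_⟩
  intro hhyp hB11 hrank c hc
  by_contra hcU
  -- We show 1 ∈ ker B, a contradiction with rank ≥ 3.
  have hone : (1 : R) ∈ LinearMap.ker B := by
    by_cases hcm : c ∈ IsLocalRing.maximalIdeal R
    · -- c ∈ m \ U : then B 1 = 0.
      have hU1 : ∀ u ∈ U, B 1 u = 0 := by
        intro u hu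
        have h := hskew u hu 1 1
        rw [mul_one, hsym (u : R) 1] at h
        have : B 1 u + B 1 u = 0 := h
        exact add_self_eq_zero.mp this
      -- m = U ⊔ span {c}
      set m' := (IsLocalRing.maximalIdeal R).restrictScalars K with hm'
      have hcm' : c ∈ m' := hcm
      have hW : U ⊔ Submodule.span K {c} = m' := by
        apply Submodule.eq_of_le_of_finrank_le
        · exact sup_le hUm ((Submodule.span_singleton_le_iff_mem c m').mpr hcm')
        · rw [← hhyp]
          have hlt : U < U ⊔ Submodule.span K {c} := by
            refine lt_of_le_of_ne le_sup_left ?_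
            intro h
            exact hcU (h ▸ Submodule.mem_sup_right (Submodule.mem_span_singleton_self c))
          have := Submodule.finrank_lt_finrank_of_lt hlt
          omega
      -- m ≤ ker (B 1)
      have hmker : m' ≤ LinearMap.ker (B 1) := by
        rw [← hW]
        apply sup_le
        · intro u hu; exact LinearMap.mem_ker.mpr (hU1 u hu)
        · rw [Submodule.span_singleton_le_iff_mem]
          refine LinearMap.mem_ker.mpr ?_
          rw [hsym]
          exact congrFun (congrArg _ (LinearMap.mem_ker.mp hc)) 1
      -- R = span{1} ⊔ m
      have hP : (Submodule.span K {(1 : R)} ⊔ m') = ⊤ := by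
        rw [eq_top_iff]
        intro x hx0
        clear hx0
        have hx : x ∈ Algebra.adjoin K (U : Set R) := by rw [hgen]; exact Algebra.mem_top
        induction hx using Algebra.adjoin_induction with
        | mem u hu => exact Submodule.mem_sup_right (hUm hu)
        | algebraMap a =>
            rw [Algebra.algebraMap_eq_smul_one]
            exact Submodule.mem_sup_left
              (Submodule.smul_mem _ a (Submodule.mem_span_singleton_self 1))
        | add x y hx hy ihx ihy => exact Submodule.add_mem _ ihx ihy
        | mul x y hx hy ihx ihy =>
            rcases Submodule.mem_sup.mp ihx with ⟨a1, ha1, u1, hu1, rfl⟩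
            rcases Submodule.mem_sup.mp ihy with ⟨a2, ha2, u2, hu2, rfl⟩
            rcases Submodule.mem_span_singleton.mp ha1 with ⟨s, rfl⟩
            rcases Submodule.mem_span_singleton.mp ha2 with ⟨t, rfl⟩
            have : (s • (1 : R) + u1) * (t • (1 : R) + u2) =
                (s * t) • (1 : R) + (t • u1 + s • u2 + u1 * u2) := by
              simp [mul_add, add_mul, smul_smul, mul_comm, smul_mul_assoc,
                mul_smul_comm]
              abel
            rw [this]
            refine Submodule.add_mem _ (Submodule.mem_sup_left
              (Submodule.smul_mem _ _ (Submodule.mem_span_singleton_self 1))) ?_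
            refine Submodule.mem_sup_right ?_
            refine Submodule.add_mem _ (Submodule.add_mem _
              (Submodule.smul_mem _ _ hu1) (Submodule.smul_mem _ _ hu2)) ?_
            exact Ideal.mul_mem_left _ u1 hu2
      -- conclude B 1 = 0
      have hker1 : LinearMap.ker (B 1) = ⊤ := by
        rw [eq_top_iff, ← hP]
        apply sup_le
        · rw [Submodule.span_singleton_le_iff_mem]
          exact LinearMap.mem_ker.mpr hB11
        · exact hmker
      rw [LinearMap.mem_ker]
      ext x
      have : x ∈ LinearMap.ker (B 1) := hker1 ▸ Submodule.mem_top
      simpa using LinearMap.mem_ker.mp this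
    · -- c is a unit
      have hunit : IsUnit c := by
        by_contra h
        exact hcm (IsLocalRing.mem_maximalIdeal c |>.mpr h)
      rcases hunit with ⟨v, rfl⟩
      have := part1 _ hc (↑v⁻¹)
      rwa [← Units.val_mul, inv_mul_cancel, Units.val_one] at this
  -- 1 ∈ ker B ⇒ ker B = ⊤ ⇒ contradiction with rank ≥ 3.
  have hker : LinearMap.ker B = ⊤ := by
    rw [eq_top_iff]
    intro r _
    have := part1 1 hone r
    rwa [mul_one] at this
  rw [hker, finrank_top] at hrank
  omega
end

section
/- Let R be a finite-dimensional commutative local associative unital algebra over a field K of characteristic zero, with maximal ideal m, and let U ⊆ m be a hyperplane in m (a subspace of codimension 1 in m) that generates R as a K-algebra. If m^3 ⊆ U, then there exists a symmetric K-bilinear form B on R such that B(1,1) = 0, the rank of B is at least 3 (dim_K R − dim_K rad(B) ≥ 3 where rad(B) = {c : B(c, R) = 0}), and B(u·b, c) + B(b, u·c) = 0 for all u ∈ U and b, c ∈ R. (This is the 'if' direction of the theorem: an H-pair (R, U) is quadratic, i.e., defines a generically transitive action on a quadric hypersurface, if and only if m^3 ⊆ U.) -/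
/-!
Let `π : R → K` be the residue map (`R = K·1 ⊕ m` because `U ⊆ m` generates `R`) and `ℓ` a
functional with kernel `K·1 ⊕ U`. The form `B(x, y) = ℓ(xy) - 2π(x)ℓ(y) - 2ℓ(x)π(y)` is symmetric
with `B(1, 1) = 0`. Writing `b' = b - π(b)` and `c' = c - π(c)`, the defect
`B(ub, c) + B(b, uc)` for `u ∈ U` equals `2ℓ(ub'c')`, which vanishes because `ub'c' ∈ m³ ⊆ U`.
Since `U` generates `R`, `K·1 ⊕ U` is not closed under multiplication, so `ℓ(uv) ≠ 0` for some
`u, v ∈ U`; with `ℓ(p) = 1` the Gram matrix of `B` on `(1, p, u) × (1, v, p)` has determinant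
`ℓ(uv)`, so `B` has rank at least `3`.
-/

open Submodule Module

section Functional

variable {K V : Type*} [Field K] [AddCommGroup V] [Module K V]

theorem Submodule.exists_dual_ker_eq_of_sup_span_singleton_eq_top {W : Submodule K V} {p : V}
    (hp : p ∉ W) (hWp : W ⊔ K ∙ p = ⊤) : ∃ f : Dual K V, LinearMap.ker f = W ∧ f p = 1 := by
  have hp0 : p ≠ 0 := fun h => hp (h ▸ W.zero_mem)
  have hcompl : IsCompl (K ∙ p) W :=
    ⟨((disjoint_span_singleton' hp0).2 hp).symm, codisjoint_iff.2 (sup_comm W _ ▸ hWp)⟩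
  refine ⟨LinearEquiv.coord K V p hp0 ∘ₗ projectionOnto _ _ hcompl, ?_, ?_⟩
  · rw [LinearEquiv.ker_comp, ker_projectionOnto]
  · simp [projectionOnto_apply_of_mem_left hcompl (mem_span_singleton_self p),
      LinearEquiv.coord_self]

theorem Submodule.notMem_span_singleton_sup {M U : Submodule K V} {e p : V} (he : e ∉ M)
    (hUM : U ≤ M) (hpM : p ∈ M) (hpU : p ∉ U) : p ∉ K ∙ e ⊔ U := by
  intro hp
  obtain ⟨_, ht, u, hu, rfl⟩ := mem_sup.1 hp
  obtain ⟨t, rfl⟩ := mem_span_singleton.1 ht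
  rcases eq_or_ne t 0 with rfl | ht0
  · exact hpU (by simpa using hu)
  · exact he ((smul_mem_iff M ht0).1 (by simpa using sub_mem hpM (hUM hu)))

theorem LinearMap.le_finrank_range_of_det_ne_zero {V' : Type*} [AddCommGroup V'] [Module K V']
    [FiniteDimensional K V] {n : ℕ} (B : V →ₗ[K] V' →ₗ[K] K) (x : Fin n → V) (y : Fin n → V')
    (h : (Matrix.of fun i j => B (x i) (y j)).det ≠ 0) :
    n ≤ finrank K (LinearMap.range B) := by
  have hind : LinearIndependent K fun i => (⟨B (x i), x i, rfl⟩ : LinearMap.range B) :=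
    LinearIndependent.of_comp
      ((LinearMap.pi fun j => LinearMap.applyₗ (y j)) ∘ₗ (LinearMap.range B).subtype)
      (Matrix.linearIndependent_rows_of_det_ne_zero h)
  simpa using hind.fintype_card_le_finrank

end Functional

section Algebra

variable {K R : Type*} [Field K] [CommRing R] [Algebra K R]

theorem span_one_sup_eq_top_of_adjoin_eq_top {U V : Submodule K R}
    (hgen : Algebra.adjoin K (U : Set R) = ⊤) (hUV : U ≤ V)
    (hV : ∀ x ∈ V, ∀ y ∈ V, x * y ∈ K ∙ (1 : R) ⊔ V) : K ∙ (1 : R) ⊔ V = ⊤ := by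
  have hmul : ∀ x ∈ K ∙ (1 : R) ⊔ V, ∀ y ∈ K ∙ (1 : R) ⊔ V, x * y ∈ K ∙ (1 : R) ⊔ V := by
    intro x hx y hy
    obtain ⟨_, ha, v, hv, rfl⟩ := mem_sup.1 hx
    obtain ⟨_, hb, w, hw, rfl⟩ := mem_sup.1 hy
    obtain ⟨s, rfl⟩ := mem_span_singleton.1 ha
    obtain ⟨t, rfl⟩ := mem_span_singleton.1 hb
    have hexpand : (s • (1 : R) + v) * (t • 1 + w) = (s * t) • 1 + (s • w + t • v) + v * w := by
      simp only [Algebra.smul_def, map_mul]; ring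
    rw [hexpand]
    refine add_mem (add_mem ?_ ?_) (hV v hv w hw)
    · exact mem_sup_left (smul_mem _ _ (mem_span_singleton_self 1))
    · exact mem_sup_right (add_mem (V.smul_mem s hw) (V.smul_mem t hv))
  let A : Subalgebra K R :=
    toSubalgebra _ (mem_sup_left (mem_span_singleton_self 1)) fun x y hx hy => hmul x hx y hy
  have hA : ⊤ ≤ A := hgen ▸ Algebra.adjoin_le fun u hu => mem_sup_right (hUV hu)
  exact eq_top_iff.2 fun x _ => hA Algebra.mem_top

theorem exists_mul_apply_ne_zero_of_ker_eq {U : Submodule K R}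
    (hgen : Algebra.adjoin K (U : Set R) = ⊤) {ℓ : Dual K R}
    (hker : LinearMap.ker ℓ = K ∙ (1 : R) ⊔ U) (hℓ : ℓ ≠ 0) :
    ∃ u ∈ U, ∃ v ∈ U, ℓ (u * v) ≠ 0 := by
  by_contra! h
  refine hℓ (LinearMap.ker_eq_top.1 ?_)
  rw [hker]
  exact span_one_sup_eq_top_of_adjoin_eq_top hgen le_rfl fun u hu v hv => hker ▸ h u hu v hv

def quadricForm (π ℓ : Dual K R) : R →ₗ[K] R →ₗ[K] K :=
  LinearMap.mk₂ K (fun x y => ℓ (x * y) - 2 * π x * ℓ y - 2 * ℓ x * π y)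
    (fun x x' y => by simp only [add_mul, map_add]; ring)
    (fun c x y => by simp only [smul_mul_assoc, map_smul, smul_eq_mul]; ring)
    (fun x y y' => by simp only [mul_add, map_add]; ring)
    (fun c x y => by simp only [mul_smul_comm, map_smul, smul_eq_mul]; ring)

@[simp]
theorem quadricForm_apply (π ℓ : Dual K R) (x y : R) :
    quadricForm π ℓ x y = ℓ (x * y) - 2 * π x * ℓ y - 2 * ℓ x * π y :=
  rfl

theorem quadricForm_comm (π ℓ : Dual K R) (x y : R) :
    quadricForm π ℓ x y = quadricForm π ℓ y x := by
  simp only [quadricForm_apply, mul_comm x y]; ring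

theorem quadricForm_mul_add_mul {I : Ideal R} {π ℓ : Dual K R} (hπ1 : π 1 = 1)
    (hπ : LinearMap.ker π = I.restrictScalars K) (hℓ : ∀ x ∈ I ^ 3, ℓ x = 0)
    {u : R} (hu : u ∈ I) (hℓu : ℓ u = 0) (b c : R) :
    quadricForm π ℓ (u * b) c + quadricForm π ℓ b (u * c) = 0 := by
  have hI : ∀ x, x - π x • 1 ∈ I := fun x => by
    rw [← restrictScalars_mem K, ← hπ, LinearMap.mem_ker, map_sub, map_smul, hπ1, smul_eq_mul,
      mul_one, sub_self]
  have hπu : ∀ x, π (u * x) = 0 := fun x => by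
    rw [← LinearMap.mem_ker, hπ]; exact I.mul_mem_right x hu
  have hcube : ℓ (u * (b - π b • 1) * (c - π c • 1)) = 0 :=
    hℓ _ (pow_three' I ▸ Ideal.mul_mem_mul (Ideal.mul_mem_mul hu (hI b)) (hI c))
  have hexpand : ℓ (u * (b - π b • 1) * (c - π c • 1)) =
      ℓ (u * b * c) - π c * ℓ (u * b) - π b * ℓ (u * c) := by
    simp only [mul_sub, sub_mul, mul_smul_comm, smul_mul_assoc, mul_one, map_sub, map_smul,
      smul_eq_mul, hℓu]
    ring
  rw [quadricForm_apply, quadricForm_apply, hπu, hπu, show b * (u * c) = u * b * c by ring]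
  linear_combination (2 : K) * hexpand.symm.trans hcube

theorem three_le_finrank_range_quadricForm [FiniteDimensional K R] {π ℓ : Dual K R}
    (hπ1 : π 1 = 1) (hℓ1 : ℓ 1 = 0) {p u v : R} (hℓp : ℓ p = 1) (hℓu : ℓ u = 0) (hℓv : ℓ v = 0)
    (huv : ℓ (u * v) ≠ 0) : 3 ≤ finrank K (LinearMap.range (quadricForm π ℓ)) := by
  refine LinearMap.le_finrank_range_of_det_ne_zero _ ![1, p, u] ![1, v, p] ?_
  simp [Matrix.det_fin_three, hπ1, hℓ1, hℓp, hℓu, hℓv, huv]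
  norm_num

end Algebra

theorem stmt17_general (K R : Type*) [Field K] [CommRing R] [Algebra K R]
    [IsLocalRing R] [FiniteDimensional K R]
    (U : Submodule K R)
    (hUm : U ≤ (IsLocalRing.maximalIdeal R).restrictScalars K)
    (hhyp : Module.finrank K U + 1 =
      Module.finrank K ↥((IsLocalRing.maximalIdeal R).restrictScalars K))
    (hgen : Algebra.adjoin K (U : Set R) = ⊤)
    (hcube : (IsLocalRing.maximalIdeal R ^ 3).restrictScalars K ≤ U) :
    ∃ B : R →ₗ[K] R →ₗ[K] K,
      (∀ x y : R, B x y = B y x) ∧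
      B 1 1 = 0 ∧
      Module.finrank K ↥(LinearMap.ker B) + 3 ≤ Module.finrank K R ∧
      ∀ u ∈ U, ∀ b c : R, B (u * b) c + B b (u * c) = 0 := by
  set M := (IsLocalRing.maximalIdeal R).restrictScalars K
  have h1M : (1 : R) ∉ M := IsLocalRing.notMem_maximalIdeal.2 isUnit_one
  have hM : K ∙ (1 : R) ⊔ M = ⊤ := span_one_sup_eq_top_of_adjoin_eq_top hgen hUm
    fun x hx y _ => mem_sup_right (Ideal.mul_mem_right y _ hx)
  obtain ⟨π, hπ, hπ1⟩ := exists_dual_ker_eq_of_sup_span_singleton_eq_top h1M (sup_comm _ M ▸ hM)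
  obtain ⟨p, hpM, hpU⟩ := SetLike.exists_of_lt (hUm.lt_of_ne fun h => by rw [h] at hhyp; omega)
  have hUp : U ⊔ K ∙ p = M :=
    eq_of_le_of_finrank_eq (sup_le hUm ((span_singleton_le_iff_mem _ _).2 hpM))
      (by rw [finrank_sup_span_singleton hpU, hhyp])
  obtain ⟨ℓ, hℓ, hℓp⟩ := exists_dual_ker_eq_of_sup_span_singleton_eq_top
    (notMem_span_singleton_sup h1M hUm hpM hpU) (by rw [sup_assoc, hUp, hM])
  have hℓW : ∀ x ∈ K ∙ (1 : R) ⊔ U, ℓ x = 0 := fun x hx => by rwa [← LinearMap.mem_ker, hℓ]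
  have hℓU : ∀ u ∈ U, ℓ u = 0 := fun u hu => hℓW u (mem_sup_right hu)
  have hℓ1 : ℓ 1 = 0 := hℓW 1 (mem_sup_left (mem_span_singleton_self 1))
  obtain ⟨u₀, hu₀, v₀, hv₀, huv⟩ :=
    exists_mul_apply_ne_zero_of_ker_eq hgen hℓ fun h => by simp [h] at hℓp
  refine ⟨quadricForm π ℓ, quadricForm_comm π ℓ, by simp [hℓ1], ?_, fun u hu =>
    quadricForm_mul_add_mul hπ1 hπ (fun x hx => hℓU x (hcube hx)) (hUm hu) (hℓU u hu)⟩
  have hrank := three_le_finrank_range_quadricForm hπ1 hℓ1 hℓp (hℓU u₀ hu₀) (hℓU v₀ hv₀) huv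
  have hdim := LinearMap.finrank_range_add_finrank_ker (quadricForm π ℓ)
  omega

/-- the 'if' direction of the quadratic H-pair theorem: let `R` be a
finite-dimensional commutative local `K`-algebra (char K = 0) with maximal ideal `m`, and
`U ⊆ m` a hyperplane in `m` generating `R` as a `K`-algebra.  If `m³ ⊆ U`, then there is a
symmetric bilinear form `B` on `R` with `B(1,1) = 0`, of rank at least `3`, such that
`B(u·b, c) + B(b, u·c) = 0` for all `u ∈ U` and `b, c ∈ R`. -/
theorem stmt17 (K R : Type*) [Field K] [CharZero K] [CommRing R] [Algebra K R]
    [IsLocalRing R] [FiniteDimensional K R]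
    (U : Submodule K R)
    (hUm : U ≤ (IsLocalRing.maximalIdeal R).restrictScalars K)
    (hhyp : Module.finrank K U + 1 =
      Module.finrank K ↥((IsLocalRing.maximalIdeal R).restrictScalars K))
    (hgen : Algebra.adjoin K (U : Set R) = ⊤)
    (hcube : (IsLocalRing.maximalIdeal R ^ 3).restrictScalars K ≤ U) :
    ∃ B : R →ₗ[K] R →ₗ[K] K,
      (∀ x y : R, B x y = B y x) ∧
      B 1 1 = 0 ∧
      Module.finrank K ↥(LinearMap.ker B) + 3 ≤ Module.finrank K R ∧
      ∀ u ∈ U, ∀ b c : R, B (u * b) c + B b (u * c) = 0 :=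
  stmt17_general K R U hUm hhyp hgen hcube
end

section
/- Let K be a field, let R and R' be finite-dimensional commutative local associative unital K-algebras with maximal ideals m and m' and residue field K, and let φ: R → R' be a surjective K-algebra homomorphism. Suppose U is a hyperplane in m, U' is a hyperplane in m', φ(U) = U', and (m')^3 ⊆ U'. Then m^3 ⊆ U. (This gives the 'only if' direction: if the H-pair (R, U) admits a homomorphism of H-pairs onto (A_k, U_k), whose maximal ideal has vanishing cube, then m^3 ⊆ U.) -/
/-!
Since `φ` is a surjective map of local rings, it maps `m` onto `m'` and `m³` onto `m'³`, and
its kernel lies in `m`. If the kernel were not contained in the hyperplane `U`, then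
`U + ker φ = m`, so `U' = φ(U) = φ(m) = m'`, which is not a hyperplane. Hence `ker φ ≤ U`,
so `U = φ⁻¹(U')`, and this contains `φ⁻¹(m'³) ⊇ m³`.
-/

open IsLocalRing Submodule Module

namespace Submodule

variable {K V : Type*} [DivisionRing K] [AddCommGroup V] [Module K V] [FiniteDimensional K V]

theorem sup_eq_of_finrank_add_one_eq {U N M : Submodule K V} (hUM : U ≤ M) (hNM : N ≤ M)
    (hNU : ¬N ≤ U) (hU : finrank K U + 1 = finrank K M) : U ⊔ N = M := by
  have hlt : finrank K U < finrank K ↥(U ⊔ N) :=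
    finrank_lt_finrank_of_lt (lt_of_le_of_ne le_sup_left fun h ↦ hNU (h ▸ le_sup_right))
  exact eq_of_le_of_finrank_le (sup_le hUM hNM) (by omega)

end Submodule

namespace LinearMap

variable {K V W : Type*} [DivisionRing K] [AddCommGroup V] [Module K V] [FiniteDimensional K V]
  [AddCommGroup W] [Module K W]

theorem ker_le_of_map_ne_of_finrank_add_one_eq (f : V →ₗ[K] W) {U M : Submodule K V}
    (hUM : U ≤ M) (hker : ker f ≤ M) (hU : finrank K U + 1 = finrank K M)
    (hne : U.map f ≠ M.map f) : ker f ≤ U := by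
  by_contra hkU
  apply hne
  rw [← sup_eq_of_finrank_add_one_eq hUM hker hkU hU, ← comap_map_eq]
  exact le_antisymm (map_mono (le_comap_map f U)) (map_comap_le f _)

end LinearMap

theorem Ideal.map_restrictScalars_of_surjective {K R S : Type*} [CommSemiring K] [CommRing R]
    [CommRing S] [Algebra K R] [Algebra K S] (φ : R →ₐ[K] S) (hφ : Function.Surjective φ)
    (I : Ideal R) : (I.restrictScalars K).map φ.toLinearMap = (I.map φ).restrictScalars K := by
  ext y
  simp [Ideal.mem_map_iff_of_surjective φ hφ]

theorem stmt18_general (K R R' : Type*) [Field K]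
    [CommRing R] [Algebra K R] [IsLocalRing R] [FiniteDimensional K R]
    [CommRing R'] [Algebra K R'] [IsLocalRing R']
    (φ : R →ₐ[K] R') (hsur : Function.Surjective φ)
    (U : Submodule K R) (U' : Submodule K R')
    (hUm : U ≤ (IsLocalRing.maximalIdeal R).restrictScalars K)
    (hhyp : Module.finrank K U + 1 =
      Module.finrank K ↥((IsLocalRing.maximalIdeal R).restrictScalars K))
    (hhyp' : Module.finrank K U' + 1 =
      Module.finrank K ↥((IsLocalRing.maximalIdeal R').restrictScalars K))
    (hmap : Submodule.map φ.toLinearMap U = U')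
    (hcube' : (IsLocalRing.maximalIdeal R' ^ 3).restrictScalars K ≤ U') :
    (IsLocalRing.maximalIdeal R ^ 3).restrictScalars K ≤ U := by
  have hm : (maximalIdeal R).map φ = maximalIdeal R' :=
    map_maximalIdeal_of_surjective (φ : R →+* R') hsur
  have : IsLocalHom (φ : R →+* R') := .of_surjective _ hsur
  have hker : LinearMap.ker φ.toLinearMap ≤ (maximalIdeal R).restrictScalars K := by
    intro x hx
    rw [← maximalIdeal_comap (φ : R →+* R')]
    exact Ideal.ker_le_comap (K := maximalIdeal R') (φ : R →+* R') hx
  have hne : U.map φ.toLinearMap ≠ ((maximalIdeal R).restrictScalars K).map φ.toLinearMap := by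
    rw [hmap, Ideal.map_restrictScalars_of_surjective φ hsur, hm]
    rintro rfl
    omega
  have hkerU := φ.toLinearMap.ker_le_of_map_ne_of_finrank_add_one_eq hUm hker hhyp hne
  intro x hx
  rw [← comap_map_eq_self hkerU, hmap]
  apply hcube'
  rw [← hm, ← Ideal.map_pow]
  exact Ideal.mem_map_of_mem φ hx

/-- the 'only if' reduction: let `R`, `R'` be finite-dimensional commutative
local `K`-algebras with residue field `K`, with maximal ideals `m`, `m'`, let `φ : R → R'` be
a surjective `K`-algebra homomorphism, `U` a hyperplane in `m`, `U'` a hyperplane in `m'` with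
`φ(U) = U'` and `(m')³ ⊆ U'`.  Then `m³ ⊆ U`. -/
theorem stmt18 (K R R' : Type*) [Field K]
    [CommRing R] [Algebra K R] [IsLocalRing R] [FiniteDimensional K R]
    [CommRing R'] [Algebra K R'] [IsLocalRing R'] [FiniteDimensional K R']
    (hres : Function.Bijective (algebraMap K (IsLocalRing.ResidueField R)))
    (hres' : Function.Bijective (algebraMap K (IsLocalRing.ResidueField R')))
    (φ : R →ₐ[K] R') (hsur : Function.Surjective φ)
    (U : Submodule K R) (U' : Submodule K R')
    (hUm : U ≤ (IsLocalRing.maximalIdeal R).restrictScalars K)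
    (hhyp : Module.finrank K U + 1 =
      Module.finrank K ↥((IsLocalRing.maximalIdeal R).restrictScalars K))
    (hUm' : U' ≤ (IsLocalRing.maximalIdeal R').restrictScalars K)
    (hhyp' : Module.finrank K U' + 1 =
      Module.finrank K ↥((IsLocalRing.maximalIdeal R').restrictScalars K))
    (hmap : Submodule.map φ.toLinearMap U = U')
    (hcube' : (IsLocalRing.maximalIdeal R' ^ 3).restrictScalars K ≤ U') :
    (IsLocalRing.maximalIdeal R ^ 3).restrictScalars K ≤ U :=
  stmt18_general K R R' φ hsur U U' hUm hhyp hhyp' hmap hcube'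
end
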